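/- arXiv:1110.6543 — 12 statements merged into one kernel-verified Lean document; each statement's English description precedes it below -/
import Mathlib

section
/- Let A and B be closed densely defined linear operators in a complex Hilbert space H, and let D be a dense linear subspace of H such that: (D.1) D ⊆ D(AB) ∩ D(BA); (D.2) ABξ − BAξ = ξ for every ξ ∈ D; (D.3) D ⊆ D(A*) ∩ D(B*). Set S = A↾D, T = B↾D, S† = A*↾D, T† = B*↾D. If either A*η ∈ D(T*) for every η ∈ D, or B*η ∈ D(S*) for every η ∈ D, then both weak products S□T and T□S are well-defined (i.e. Tξ ∈ D((S†)*), Sξ ∈ D((T†)*), S†η ∈ D(T*), T†η ∈ D(S*) for all ξ, η ∈ D) and (S†)*(Tξ) − (T†)*(Sξ) = ξ for every ξ ∈ D. -/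
/-!
Pairing (D.2) with `η ∈ D` and moving `A` and `B` across the inner product through (D.3) gives the
weak commutation relation `⟪Tξ, A*η⟫ - ⟪Sξ, B*η⟫ = ⟪ξ, η⟫` on `D`. Read as a functional of `ξ`, it
says that `ξ ↦ ⟪Tξ, A*η⟫` is represented by a vector exactly when `ξ ↦ ⟪Sξ, B*η⟫` is, so either
hypothesis yields both. The vectors `Tξ` and `Sξ` lie in the domains of `(S†)*` and `(T†)*` with
values `ABξ` and `BAξ`, unique by density of `D`, and (D.2) gives the final identity.
-/

open scoped InnerProductSpace

section AdjointDomain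

variable {𝕜 H : Type*} [RCLike 𝕜] [NormedAddCommGroup H] [InnerProductSpace 𝕜 H]
  {D : Submodule 𝕜 H}

def MemAdjointDomain (f : D → H) (u : H) : Prop :=
  ∃ v : H, ∀ ξ : D, ⟪f ξ, u⟫_𝕜 = ⟪(ξ : H), v⟫_𝕜

theorem memAdjointDomain_iff_of_inner_sub_eq {f g : D → H} {a b η : H}
    (h : ∀ ξ : D, ⟪f ξ, a⟫_𝕜 - ⟪g ξ, b⟫_𝕜 = ⟪(ξ : H), η⟫_𝕜) :
    MemAdjointDomain f a ↔ MemAdjointDomain g b := by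
  constructor
  · rintro ⟨u, hu⟩
    refine ⟨u - η, fun ξ => ?_⟩
    rw [inner_sub_right, ← hu, ← h]
    ring
  · rintro ⟨u, hu⟩
    refine ⟨u + η, fun ξ => ?_⟩
    rw [inner_add_right, ← hu, ← h]
    ring

end AdjointDomain

theorem inner_comm_of_inner_eq {𝕜 H : Type*} [RCLike 𝕜] [NormedAddCommGroup H]
    [InnerProductSpace 𝕜 H] {x y u v : H} (h : ⟪x, y⟫_𝕜 = ⟪u, v⟫_𝕜) : ⟪y, x⟫_𝕜 = ⟪v, u⟫_𝕜 := by
  rw [← inner_conj_symm, h, inner_conj_symm]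

theorem weak_products_well_defined_of_restrictions_general
    {H : Type*} [NormedAddCommGroup H] [InnerProductSpace ℂ H]
    (dA dB D : Submodule ℂ H)
    (A : dA →ₗ[ℂ] H) (B : dB →ₗ[ℂ] H)
    (hD : Dense (D : Set H))
    (hDA : D ≤ dA) (hDB : D ≤ dB)
    -- (D.1): D ⊆ D(AB) ∩ D(BA)
    (hD1a : ∀ ξ : D, B ⟨(ξ : H), hDB ξ.2⟩ ∈ dA)
    (hD1b : ∀ ξ : D, A ⟨(ξ : H), hDA ξ.2⟩ ∈ dB)
    -- (D.2): ABξ − BAξ = ξ for every ξ ∈ D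
    (hD2 : ∀ ξ : D,
      A ⟨B ⟨(ξ : H), hDB ξ.2⟩, hD1a ξ⟩ - B ⟨A ⟨(ξ : H), hDA ξ.2⟩, hD1b ξ⟩ = (ξ : H))
    -- (D.3): D ⊆ D(A*) ∩ D(B*); Astar = A*↾D = S†, Bstar = B*↾D = T†
    (Astar Bstar : D → H)
    (hD3a : ∀ (η : D) (ξ : dA), (inner ℂ (A ξ) (η : H) : ℂ) = inner ℂ (ξ : H) (Astar η))
    (hD3b : ∀ (η : D) (ξ : dB), (inner ℂ (B ξ) (η : H) : ℂ) = inner ℂ (ξ : H) (Bstar η))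
    -- S = A↾D and T = B↾D
    (S T : D → H)
    (hSdef : ∀ ξ : D, S ξ = A ⟨(ξ : H), hDA ξ.2⟩)
    (hTdef : ∀ ξ : D, T ξ = B ⟨(ξ : H), hDB ξ.2⟩)
    -- either A*η ∈ D(T*) for every η ∈ D, or B*η ∈ D(S*) for every η ∈ D
    (hyp : (∀ η : D, ∃ u : H, ∀ ξ : D, (inner ℂ (T ξ) (Astar η) : ℂ) = inner ℂ (ξ : H) u) ∨
           (∀ η : D, ∃ u : H, ∀ ξ : D, (inner ℂ (S ξ) (Bstar η) : ℂ) = inner ℂ (ξ : H) u)) :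
    -- Tξ ∈ D((S†)*) for every ξ ∈ D
    (∀ ξ : D, ∃ v : H, ∀ η : D, (inner ℂ (Astar η) (T ξ) : ℂ) = inner ℂ (η : H) v) ∧
    -- Sξ ∈ D((T†)*) for every ξ ∈ D
    (∀ ξ : D, ∃ w : H, ∀ η : D, (inner ℂ (Bstar η) (S ξ) : ℂ) = inner ℂ (η : H) w) ∧
    -- S†η ∈ D(T*) for every η ∈ D
    (∀ η : D, ∃ u : H, ∀ ξ : D, (inner ℂ (T ξ) (Astar η) : ℂ) = inner ℂ (ξ : H) u) ∧
    -- T†η ∈ D(S*) for every η ∈ D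
    (∀ η : D, ∃ u : H, ∀ ξ : D, (inner ℂ (S ξ) (Bstar η) : ℂ) = inner ℂ (ξ : H) u) ∧
    -- (S†)*(Tξ) − (T†)*(Sξ) = ξ for every ξ ∈ D
    (∀ ξ : D, ∀ v w : H,
      (∀ η : D, (inner ℂ (Astar η) (T ξ) : ℂ) = inner ℂ (η : H) v) →
      (∀ η : D, (inner ℂ (Bstar η) (S ξ) : ℂ) = inner ℂ (η : H) w) →
      v - w = (ξ : H)) := by
  set AB : D → H := fun ξ => A ⟨B ⟨(ξ : H), hDB ξ.2⟩, hD1a ξ⟩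
  set BA : D → H := fun ξ => B ⟨A ⟨(ξ : H), hDA ξ.2⟩, hD1b ξ⟩
  have hT_AB (ξ η : D) : ⟪T ξ, Astar η⟫_ℂ = ⟪AB ξ, (η : H)⟫_ℂ := by
    rw [hTdef]; exact (hD3a η ⟨_, hD1a ξ⟩).symm
  have hS_BA (ξ η : D) : ⟪S ξ, Bstar η⟫_ℂ = ⟪BA ξ, (η : H)⟫_ℂ := by
    rw [hSdef]; exact (hD3b η ⟨_, hD1b ξ⟩).symm
  have hcomm (ξ η : D) : ⟪T ξ, Astar η⟫_ℂ - ⟪S ξ, Bstar η⟫_ℂ = ⟪(ξ : H), η⟫_ℂ := by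
    rw [hT_AB, hS_BA, ← inner_sub_left, hD2]
  have hdomain (η : D) : MemAdjointDomain T (Astar η) ↔ MemAdjointDomain S (Bstar η) :=
    memAdjointDomain_iff_of_inner_sub_eq (hcomm · η)
  have hAB_value (ξ η : D) : ⟪Astar η, T ξ⟫_ℂ = ⟪(η : H), AB ξ⟫_ℂ :=
    inner_comm_of_inner_eq (hT_AB ξ η)
  have hBA_value (ξ η : D) : ⟪Bstar η, S ξ⟫_ℂ = ⟪(η : H), BA ξ⟫_ℂ :=
    inner_comm_of_inner_eq (hS_BA ξ η)
  refine ⟨fun ξ => ⟨AB ξ, hAB_value ξ⟩, fun ξ => ⟨BA ξ, hBA_value ξ⟩,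
    hyp.elim id fun h η => (hdomain η).2 (h η), hyp.elim (fun h η => (hdomain η).1 (h η)) id, ?_⟩
  intro ξ v w hv hw
  have hv_eq : v = AB ξ :=
    hD.eq_of_inner_right ℂ fun η hη => (hv ⟨η, hη⟩).symm.trans (hAB_value ξ ⟨η, hη⟩)
  have hw_eq : w = BA ξ :=
    hD.eq_of_inner_right ℂ fun η hη => (hw ⟨η, hη⟩).symm.trans (hBA_value ξ ⟨η, hη⟩)
  rw [hv_eq, hw_eq, hD2]

theorem weak_products_well_defined_of_restrictions
    {H : Type*} [NormedAddCommGroup H] [InnerProductSpace ℂ H] [CompleteSpace H]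
    (dA dB D : Submodule ℂ H)
    (A : dA →ₗ[ℂ] H) (B : dB →ₗ[ℂ] H)
    (hdA : Dense (dA : Set H)) (hdB : Dense (dB : Set H)) (hD : Dense (D : Set H))
    -- A and B are closed operators
    (hAclosed : IsClosed {p : H × H | ∃ ξ : dA, (ξ : H) = p.1 ∧ A ξ = p.2})
    (hBclosed : IsClosed {p : H × H | ∃ ξ : dB, (ξ : H) = p.1 ∧ B ξ = p.2})
    (hDA : D ≤ dA) (hDB : D ≤ dB)
    -- (D.1): D ⊆ D(AB) ∩ D(BA)
    (hD1a : ∀ ξ : D, B ⟨(ξ : H), hDB ξ.2⟩ ∈ dA)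
    (hD1b : ∀ ξ : D, A ⟨(ξ : H), hDA ξ.2⟩ ∈ dB)
    -- (D.2): ABξ − BAξ = ξ for every ξ ∈ D
    (hD2 : ∀ ξ : D,
      A ⟨B ⟨(ξ : H), hDB ξ.2⟩, hD1a ξ⟩ - B ⟨A ⟨(ξ : H), hDA ξ.2⟩, hD1b ξ⟩ = (ξ : H))
    -- (D.3): D ⊆ D(A*) ∩ D(B*); Astar = A*↾D = S†, Bstar = B*↾D = T†
    (Astar Bstar : D → H)
    (hD3a : ∀ (η : D) (ξ : dA), (inner ℂ (A ξ) (η : H) : ℂ) = inner ℂ (ξ : H) (Astar η))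
    (hD3b : ∀ (η : D) (ξ : dB), (inner ℂ (B ξ) (η : H) : ℂ) = inner ℂ (ξ : H) (Bstar η))
    -- S = A↾D and T = B↾D
    (S T : D → H)
    (hSdef : ∀ ξ : D, S ξ = A ⟨(ξ : H), hDA ξ.2⟩)
    (hTdef : ∀ ξ : D, T ξ = B ⟨(ξ : H), hDB ξ.2⟩)
    -- either A*η ∈ D(T*) for every η ∈ D, or B*η ∈ D(S*) for every η ∈ D
    (hyp : (∀ η : D, ∃ u : H, ∀ ξ : D, (inner ℂ (T ξ) (Astar η) : ℂ) = inner ℂ (ξ : H) u) ∨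
           (∀ η : D, ∃ u : H, ∀ ξ : D, (inner ℂ (S ξ) (Bstar η) : ℂ) = inner ℂ (ξ : H) u)) :
    -- Tξ ∈ D((S†)*) for every ξ ∈ D
    (∀ ξ : D, ∃ v : H, ∀ η : D, (inner ℂ (Astar η) (T ξ) : ℂ) = inner ℂ (η : H) v) ∧
    -- Sξ ∈ D((T†)*) for every ξ ∈ D
    (∀ ξ : D, ∃ w : H, ∀ η : D, (inner ℂ (Bstar η) (S ξ) : ℂ) = inner ℂ (η : H) w) ∧
    -- S†η ∈ D(T*) for every η ∈ D
    (∀ η : D, ∃ u : H, ∀ ξ : D, (inner ℂ (T ξ) (Astar η) : ℂ) = inner ℂ (ξ : H) u) ∧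
    -- T†η ∈ D(S*) for every η ∈ D
    (∀ η : D, ∃ u : H, ∀ ξ : D, (inner ℂ (S ξ) (Bstar η) : ℂ) = inner ℂ (ξ : H) u) ∧
    -- (S†)*(Tξ) − (T†)*(Sξ) = ξ for every ξ ∈ D
    (∀ ξ : D, ∀ v w : H,
      (∀ η : D, (inner ℂ (Astar η) (T ξ) : ℂ) = inner ℂ (η : H) v) →
      (∀ η : D, (inner ℂ (Bstar η) (S ξ) : ℂ) = inner ℂ (η : H) w) →
      v - w = (ξ : H)) :=
  weak_products_well_defined_of_restrictions_general dA dB D A B hD hDA hDB hD1a hD1b hD2 Astar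
    Bstar hD3a hD3b S T hSdef hTdef hyp
end

section
/- Let V_S and V_T be weakly continuous semigroups of bounded operators on H satisfying the generalized Weyl commutation relation V_S(α)V_T(β) = e^{αβ} V_T(β)V_S(α) for all α, β ≥ 0. Let T ∈ L†(D,H) and assume that T is obtained as the weak derivative of V_T at 0 on D in the following sense: for every ξ ∈ D and u ∈ H, lim_{β→0⁺} ⟨(V_T(β)ξ − ξ)/β, u⟩ = ⟨Tξ, u⟩, and for every η ∈ D and u ∈ H, lim_{β→0⁺} ⟨(V_T(β)*η − η)/β, u⟩ = ⟨T†η, u⟩. Then for all ξ, η ∈ D and all α ≥ 0: ⟨V_S(α)Tξ, η⟩ − ⟨V_S(α)ξ, T†η⟩ = α⟨V_S(α)ξ, η⟩. -/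
open Filter Topology

/-! For `β > 0` the Weyl relation turns the difference quotient of `V_T` at `ξ`, tested against
`V_S(α)* η`, into `e^{αβ}` times the difference quotient of `V_T(β)*` at `η`, tested against
`V_S(α) ξ`, plus `(e^{αβ} - 1)/β ⟨V_S(α) ξ, η⟩`. Letting `β → 0⁺`, the two quotients tend to
`T ξ` and `T† η` and `(e^{αβ} - 1)/β → α`, which gives the identity. -/

open ContinuousLinearMap in
theorem inner_smul_sub_adjoint_of_comp_eq_smul_comp
    {H : Type*} [NormedAddCommGroup H] [InnerProductSpace ℂ H] [CompleteSpace H]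
    {A B : H →L[ℂ] H} {c : ℝ} (hAB : A ∘L B = (c : ℂ) • (B ∘L A)) (t : ℝ) (x y : H) :
    inner ℂ ((t : ℂ)⁻¹ • (B x - x)) (adjoint A y)
      = c * inner ℂ (A x) ((t : ℂ)⁻¹ • (adjoint B y - y)) + (c - 1) / t * inner ℂ (A x) y := by
  have hABx : A (B x) = (c : ℂ) • B (A x) := by simpa using congr($hAB x)
  rw [inner_smul_left, inner_smul_right, adjoint_inner_right, map_sub, hABx, inner_sub_left,
    inner_sub_right, inner_smul_left, adjoint_inner_right, map_inv₀, Complex.conj_ofReal,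
    Complex.conj_ofReal]
  ring

theorem tendsto_exp_mul_sub_one_div (α : ℝ) :
    Tendsto (fun β : ℝ => ((Real.exp (α * β) : ℂ) - 1) / β) (𝓝[>] 0) (𝓝 (α : ℂ)) := by
  have hderiv : HasDerivAt (fun β : ℝ => Real.exp (α * β)) α 0 := by
    simpa using ((hasDerivAt_id (0 : ℝ)).const_mul α).exp
  have hslope := (hasDerivAt_iff_tendsto_slope.mp hderiv).mono_left
    (nhdsWithin_mono _ fun _ hβ => ne_of_gt hβ)
  refine ((Complex.continuous_ofReal.tendsto _).comp hslope).congr fun β => ?_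
  simp [slope_def_field, div_eq_inv_mul]

theorem weyl_relation_implies_quasi_strong_general
    {H : Type*} [NormedAddCommGroup H] [InnerProductSpace ℂ H] [CompleteSpace H]
    (D : Submodule ℂ H)
    (T Td : D →ₗ[ℂ] H)
    (VS VT : ℝ → (H →L[ℂ] H))
    -- generalized Weyl commutation relation
    (hWeyl : ∀ α β : ℝ, 0 ≤ α → 0 ≤ β →
      (VS α) ∘L (VT β) = (Real.exp (α * β) : ℂ) • ((VT β) ∘L (VS α)))
    -- T is the weak derivative of V_T at 0 on D
    (hTgen : ∀ (ξ : D) (u : H),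
      Tendsto (fun β : ℝ => (inner ℂ (((β : ℂ))⁻¹ • (VT β (ξ : H) - (ξ : H))) u : ℂ))
        (𝓝[>] (0 : ℝ)) (𝓝 ((inner ℂ (T ξ) u : ℂ))))
    -- T† is the weak derivative of V_T(·)* at 0 on D
    (hTdgen : ∀ (η : D) (u : H),
      Tendsto (fun β : ℝ =>
          (inner ℂ (((β : ℂ))⁻¹ • (ContinuousLinearMap.adjoint (VT β) (η : H) - (η : H))) u : ℂ))
        (𝓝[>] (0 : ℝ)) (𝓝 ((inner ℂ (Td η) u : ℂ)))) :
    ∀ (ξ η : D) (α : ℝ), 0 ≤ α →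
      (inner ℂ (VS α (T ξ)) (η : H) : ℂ) - (inner ℂ (VS α (ξ : H)) (Td η) : ℂ)
        = (α : ℂ) * (inner ℂ (VS α (ξ : H)) (η : H) : ℂ) := by
  intro ξ η α hα
  have hleft := (hTgen ξ (ContinuousLinearMap.adjoint (VS α) η)).congr' <| by
    filter_upwards [self_mem_nhdsWithin] with β hβ
    exact inner_smul_sub_adjoint_of_comp_eq_smul_comp (hWeyl α β hα hβ.le) β ξ η
  have hexp : Tendsto (fun β : ℝ => (Real.exp (α * β) : ℂ)) (𝓝[>] 0) (𝓝 1) :=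
    ((by fun_prop : Continuous fun β : ℝ => (Real.exp (α * β) : ℂ)).tendsto' 0 1
      (by simp)).mono_left nhdsWithin_le_nhds
  have hdual : Tendsto (fun β : ℝ => inner ℂ (VS α ξ) ((β : ℂ)⁻¹ • (ContinuousLinearMap.adjoint (VT β) η - η)))
      (𝓝[>] 0) (𝓝 (inner ℂ (VS α ξ) (Td η))) := by
    simpa only [Function.comp_def, inner_conj_symm] using
      (Complex.continuous_conj.tendsto _).comp (hTdgen η (VS α ξ))
  have hright := (hexp.mul hdual).add ((tendsto_exp_mul_sub_one_div α).mul_const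
    (inner ℂ (VS α (ξ : H)) (η : H)))
  rw [← ContinuousLinearMap.adjoint_inner_right, tendsto_nhds_unique hleft hright]
  ring

theorem weyl_relation_implies_quasi_strong
    {H : Type*} [NormedAddCommGroup H] [InnerProductSpace ℂ H] [CompleteSpace H]
    (D : Submodule ℂ H) (hD : Dense (D : Set H))
    (T Td : D →ₗ[ℂ] H)
    (hT : ∀ ξ η : D, (inner ℂ (T ξ) (η : H) : ℂ) = inner ℂ (ξ : H) (Td η))
    (VS VT : ℝ → (H →L[ℂ] H))
    -- V_S is a weakly continuous semigroup
    (hVS0 : VS 0 = 1)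
    (hVSsem : ∀ s t : ℝ, 0 ≤ s → 0 ≤ t → VS (s + t) = (VS s) ∘L (VS t))
    (hVSw : ∀ x y : H, ContinuousOn (fun t : ℝ => (inner ℂ (VS t x) y : ℂ)) (Set.Ici 0))
    -- V_T is a weakly continuous semigroup
    (hVT0 : VT 0 = 1)
    (hVTsem : ∀ s t : ℝ, 0 ≤ s → 0 ≤ t → VT (s + t) = (VT s) ∘L VT t)
    (hVTw : ∀ x y : H, ContinuousOn (fun t : ℝ => (inner ℂ (VT t x) y : ℂ)) (Set.Ici 0))
    -- generalized Weyl commutation relation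
    (hWeyl : ∀ α β : ℝ, 0 ≤ α → 0 ≤ β →
      (VS α) ∘L (VT β) = (Real.exp (α * β) : ℂ) • ((VT β) ∘L (VS α)))
    -- T is the weak derivative of V_T at 0 on D
    (hTgen : ∀ (ξ : D) (u : H),
      Tendsto (fun β : ℝ => (inner ℂ (((β : ℂ))⁻¹ • (VT β (ξ : H) - (ξ : H))) u : ℂ))
        (𝓝[>] (0 : ℝ)) (𝓝 ((inner ℂ (T ξ) u : ℂ))))
    -- T† is the weak derivative of V_T(·)* at 0 on D
    (hTdgen : ∀ (η : D) (u : H),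
      Tendsto (fun β : ℝ =>
          (inner ℂ (((β : ℂ))⁻¹ • (ContinuousLinearMap.adjoint (VT β) (η : H) - (η : H))) u : ℂ))
        (𝓝[>] (0 : ℝ)) (𝓝 ((inner ℂ (Td η) u : ℂ)))) :
    ∀ (ξ η : D) (α : ℝ), 0 ≤ α →
      (inner ℂ (VS α (T ξ)) (η : H) : ℂ) - (inner ℂ (VS α (ξ : H)) (Td η) : ℂ)
        = (α : ℂ) * (inner ℂ (VS α (ξ : H)) (η : H) : ℂ) :=
  weyl_relation_implies_quasi_strong_general D T Td VS VT hWeyl hTgen hTdgen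
end

section
/- Let S, T ∈ L†(D,H) and let V_S be a weakly continuous semigroup of bounded operators on H such that: for every ξ ∈ D and u ∈ H, lim_{α→0⁺} ⟨(V_S(α)ξ − ξ)/α, u⟩ = ⟨Sξ, u⟩; for every η ∈ D and u ∈ H, lim_{α→0⁺} ⟨(V_S(α)*η − η)/α, u⟩ = ⟨S†η, u⟩; and the quasi-strong commutation relation holds: ⟨V_S(α)Tξ, η⟩ − ⟨V_S(α)ξ, T†η⟩ = α⟨V_S(α)ξ, η⟩ for all ξ, η ∈ D and all α ≥ 0. Then S and T satisfy the weak commutation relation [S,T] = 1_D, i.e. ⟨Tξ, S†η⟩ − ⟨Sξ, T†η⟩ = ⟨ξ, η⟩ for all ξ, η ∈ D. -/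
/-! For α > 0, subtracting the quasi-strong relation at α = 0 from the one at α and dividing by
α expresses ⟨V(α)ξ, η⟩ as a combination of the difference quotients of V and V*. As α → 0⁺
that combination tends to ⟨Tξ, S†η⟩ − ⟨Sξ, T†η⟩, while ⟨V(α)ξ, η⟩ tends to ⟨ξ, η⟩ by weak
continuity. -/

open Filter Topology

open scoped InnerProductSpace

theorem conj_inner_adjoint_diff_sub_inner_diff {𝕜 H : Type*} [RCLike 𝕜] [NormedAddCommGroup H]
    [InnerProductSpace 𝕜 H] [CompleteSpace H] (V : H →L[𝕜] H) {c : 𝕜} (hc : starRingEnd 𝕜 c = c)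
    (x y a b : H) :
    starRingEnd 𝕜 ⟪c • (ContinuousLinearMap.adjoint V y - y), a⟫_𝕜 - ⟪c • (V x - x), b⟫_𝕜
      = c * ((⟪V a, y⟫_𝕜 - ⟪V x, b⟫_𝕜) - (⟪a, y⟫_𝕜 - ⟪x, b⟫_𝕜)) := by
  simp only [inner_smul_left, map_mul, hc, inner_sub_left, map_sub, inner_conj_symm,
    ContinuousLinearMap.adjoint_inner_right]
  ring

theorem quasi_strong_implies_weak_general
    {H : Type*} [NormedAddCommGroup H] [InnerProductSpace ℂ H] [CompleteSpace H]
    (D : Submodule ℂ H)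
    (S Sd T Td : D →ₗ[ℂ] H)
    (VS : ℝ → (H →L[ℂ] H))
    -- V_S is a weakly continuous semigroup
    (hVS0 : VS 0 = 1)
    (hVSw : ∀ x y : H, ContinuousOn (fun t : ℝ => (inner ℂ (VS t x) y : ℂ)) (Set.Ici 0))
    -- S is the weak derivative of V_S at 0 on D
    (hSgen : ∀ (ξ : D) (u : H),
      Tendsto (fun α : ℝ => (inner ℂ (((α : ℂ))⁻¹ • (VS α (ξ : H) - (ξ : H))) u : ℂ))
        (𝓝[>] (0 : ℝ)) (𝓝 ((inner ℂ (S ξ) u : ℂ))))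
    -- S† is the weak derivative of V_S(·)* at 0 on D
    (hSdgen : ∀ (η : D) (u : H),
      Tendsto (fun α : ℝ =>
          (inner ℂ (((α : ℂ))⁻¹ • (ContinuousLinearMap.adjoint (VS α) (η : H) - (η : H))) u : ℂ))
        (𝓝[>] (0 : ℝ)) (𝓝 ((inner ℂ (Sd η) u : ℂ))))
    -- quasi-strong commutation relation
    (hQS : ∀ (ξ η : D) (α : ℝ), 0 ≤ α →
      (inner ℂ (VS α (T ξ)) (η : H) : ℂ) - (inner ℂ (VS α (ξ : H)) (Td η) : ℂ)
        = (α : ℂ) * (inner ℂ (VS α (ξ : H)) (η : H) : ℂ)) :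
    -- weak commutation relation [S,T] = 1_D
    ∀ ξ η : D,
      (inner ℂ (T ξ) (Sd η) : ℂ) - (inner ℂ (S ξ) (Td η) : ℂ) = (inner ℂ (ξ : H) (η : H) : ℂ) := by
  intro ξ η
  have hVS_tendsto : Tendsto (fun α : ℝ => ⟪VS α ξ, η⟫_ℂ) (𝓝[>] 0) (𝓝 ⟪(ξ : H), η⟫_ℂ) := by
    simpa [hVS0] using ((hVSw ξ η 0 Set.self_mem_Ici).mono Set.Ioi_subset_Ici_self).tendsto
  have hquot_tendsto := ((Complex.continuous_conj.tendsto _).comp (hSdgen η (T ξ))).sub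
    (hSgen ξ (Td η))
  rw [inner_conj_symm] at hquot_tendsto
  refine tendsto_nhds_unique (hquot_tendsto.congr' ?_) hVS_tendsto
  filter_upwards [self_mem_nhdsWithin] with α (hα : 0 < α)
  have hα_ne : (α : ℂ) ≠ 0 := by exact_mod_cast hα.ne'
  -- At α = 0 the quasi-strong relation says ⟨Tξ, η⟩ = ⟨ξ, T†η⟩.
  have hT := hQS ξ η 0 le_rfl
  simp only [hVS0, one_apply_eq_self, Complex.ofReal_zero, zero_mul] at hT
  have hα_real : starRingEnd ℂ (α : ℂ)⁻¹ = (α : ℂ)⁻¹ := by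
    rw [map_inv₀, Complex.conj_ofReal]
  rw [Function.comp_apply, conj_inner_adjoint_diff_sub_inner_diff _ hα_real,
    hQS ξ η α hα.le, hT, sub_zero, inv_mul_cancel_left₀ hα_ne]

theorem quasi_strong_implies_weak
    {H : Type*} [NormedAddCommGroup H] [InnerProductSpace ℂ H] [CompleteSpace H]
    (D : Submodule ℂ H) (hD : Dense (D : Set H))
    (S Sd T Td : D →ₗ[ℂ] H)
    (hS : ∀ ξ η : D, (inner ℂ (S ξ) (η : H) : ℂ) = inner ℂ (ξ : H) (Sd η))
    (hT : ∀ ξ η : D, (inner ℂ (T ξ) (η : H) : ℂ) = inner ℂ (ξ : H) (Td η))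
    (VS : ℝ → (H →L[ℂ] H))
    -- V_S is a weakly continuous semigroup
    (hVS0 : VS 0 = 1)
    (hVSsem : ∀ s t : ℝ, 0 ≤ s → 0 ≤ t → VS (s + t) = (VS s) ∘L (VS t))
    (hVSw : ∀ x y : H, ContinuousOn (fun t : ℝ => (inner ℂ (VS t x) y : ℂ)) (Set.Ici 0))
    -- S is the weak derivative of V_S at 0 on D
    (hSgen : ∀ (ξ : D) (u : H),
      Tendsto (fun α : ℝ => (inner ℂ (((α : ℂ))⁻¹ • (VS α (ξ : H) - (ξ : H))) u : ℂ))
        (𝓝[>] (0 : ℝ)) (𝓝 ((inner ℂ (S ξ) u : ℂ))))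
    -- S† is the weak derivative of V_S(·)* at 0 on D
    (hSdgen : ∀ (η : D) (u : H),
      Tendsto (fun α : ℝ =>
          (inner ℂ (((α : ℂ))⁻¹ • (ContinuousLinearMap.adjoint (VS α) (η : H) - (η : H))) u : ℂ))
        (𝓝[>] (0 : ℝ)) (𝓝 ((inner ℂ (Sd η) u : ℂ))))
    -- quasi-strong commutation relation
    (hQS : ∀ (ξ η : D) (α : ℝ), 0 ≤ α →
      (inner ℂ (VS α (T ξ)) (η : H) : ℂ) - (inner ℂ (VS α (ξ : H)) (Td η) : ℂ)
        = (α : ℂ) * (inner ℂ (VS α (ξ : H)) (η : H) : ℂ)) :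
    -- weak commutation relation [S,T] = 1_D
    ∀ ξ η : D,
      (inner ℂ (T ξ) (Sd η) : ℂ) - (inner ℂ (S ξ) (Td η) : ℂ) = (inner ℂ (ξ : H) (η : H) : ℂ) :=
  quasi_strong_implies_weak_general D S Sd T Td VS hVS0 hVSw hSgen hSdgen hQS
end

section
/- Let S, T ∈ L†(D,H) satisfy the weak commutation relation [S,T] = 1_D, and let ξ₀ ∈ D with ξ₀ ≠ 0 and Sξ₀ = 0. Then Tξ₀ ≠ 0 and ⟨Tξ₀, S†η⟩ = ⟨ξ₀, η⟩ for every η ∈ D; in particular Tξ₀ ∈ D((S†)*) with (S†)*(Tξ₀) = ξ₀, and hence T((S†)*(Tξ₀)) = Tξ₀, i.e. Tξ₀ is an eigenvector of T(S†)* with eigenvalue 1. -/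
/-!
At a kernel vector `ξ₀` of `S` the term `⟨Sξ₀, T†η⟩` of the commutation relation vanishes, leaving
`⟨Tξ₀, S†η⟩ = ⟨ξ₀, η⟩` for all `η ∈ D`. If `Tξ₀` were `0`, then `ξ₀` would be orthogonal to the
dense subspace `D`, hence zero.
-/

open scoped InnerProductSpace

section

variable {H : Type*} [NormedAddCommGroup H] [InnerProductSpace ℂ H] {D : Submodule ℂ H}

/-- The weak commutation relation `[S, T] = 1_D`, with `Sd = S†` and `Td = T†`. -/
def WeakCommutation (S Sd T Td : D →ₗ[ℂ] H) : Prop :=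
  ∀ ξ η : D, ⟪T ξ, Sd η⟫_ℂ - ⟪S ξ, Td η⟫_ℂ = ⟪(ξ : H), (η : H)⟫_ℂ

namespace WeakCommutation

variable {S Sd T Td : D →ₗ[ℂ] H} {ξ : D}

theorem inner_apply_adjoint_of_apply_eq_zero (hCR : WeakCommutation S Sd T Td) (hSξ : S ξ = 0)
    (η : D) : ⟪T ξ, Sd η⟫_ℂ = ⟪(ξ : H), (η : H)⟫_ℂ := by
  simpa [hSξ] using hCR ξ η

theorem inner_adjoint_apply_of_apply_eq_zero (hCR : WeakCommutation S Sd T Td) (hSξ : S ξ = 0)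
    (η : D) : ⟪Sd η, T ξ⟫_ℂ = ⟪(η : H), (ξ : H)⟫_ℂ := by
  rw [← inner_conj_symm, inner_apply_adjoint_of_apply_eq_zero hCR hSξ, inner_conj_symm]

theorem apply_ne_zero_of_apply_eq_zero (hD : Dense (D : Set H))
    (hCR : WeakCommutation S Sd T Td) (hξ : (ξ : H) ≠ 0) (hSξ : S ξ = 0) : T ξ ≠ 0 := by
  intro hTξ
  refine hξ (hD.eq_zero_of_inner_left ℂ fun v hv => ?_)
  simpa [hTξ] using (inner_apply_adjoint_of_apply_eq_zero hCR hSξ ⟨v, hv⟩).symm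

end WeakCommutation

end

open WeakCommutation in
theorem eigenvector_of_kernel_vector_general
    {H : Type*} [NormedAddCommGroup H] [InnerProductSpace ℂ H]
    (D : Submodule ℂ H) (hD : Dense (D : Set H))
    (S Sd T Td : D →ₗ[ℂ] H)
    (hCR : ∀ ξ η : D,
      (inner ℂ (T ξ) (Sd η) : ℂ) - (inner ℂ (S ξ) (Td η) : ℂ) = (inner ℂ (ξ : H) (η : H) : ℂ))
    (ξ₀ : D) (hξ₀ : (ξ₀ : H) ≠ 0) (hSξ₀ : S ξ₀ = 0) :
    T ξ₀ ≠ 0 ∧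
    -- ⟨Tξ₀, S†η⟩ = ⟨ξ₀, η⟩ for every η ∈ D
    (∀ η : D, (inner ℂ (T ξ₀) (Sd η) : ℂ) = inner ℂ (ξ₀ : H) (η : H)) ∧
    -- Tξ₀ ∈ D((S†)*) with (S†)*(Tξ₀) = ξ₀
    (∀ η : D, (inner ℂ (Sd η) (T ξ₀) : ℂ) = inner ℂ (η : H) (ξ₀ : H)) ∧
    -- hence T((S†)*(Tξ₀)) = Tξ₀ : Tξ₀ is an eigenvector of T(S†)* with eigenvalue 1
    (∃ v : D, (v : H) = (ξ₀ : H) ∧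
      (∀ η : D, (inner ℂ (Sd η) (T ξ₀) : ℂ) = inner ℂ (η : H) (v : H)) ∧
      T v = (1 : ℂ) • T ξ₀) :=
  ⟨apply_ne_zero_of_apply_eq_zero hD hCR hξ₀ hSξ₀,
    inner_apply_adjoint_of_apply_eq_zero hCR hSξ₀,
    inner_adjoint_apply_of_apply_eq_zero hCR hSξ₀,
    ξ₀, rfl, inner_adjoint_apply_of_apply_eq_zero hCR hSξ₀, (one_smul ℂ _).symm⟩

theorem eigenvector_of_kernel_vector
    {H : Type*} [NormedAddCommGroup H] [InnerProductSpace ℂ H]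
    (D : Submodule ℂ H) (hD : Dense (D : Set H))
    (S Sd T Td : D →ₗ[ℂ] H)
    (hS : ∀ ξ η : D, (inner ℂ (S ξ) (η : H) : ℂ) = inner ℂ (ξ : H) (Sd η))
    (hT : ∀ ξ η : D, (inner ℂ (T ξ) (η : H) : ℂ) = inner ℂ (ξ : H) (Td η))
    (hCR : ∀ ξ η : D,
      (inner ℂ (T ξ) (Sd η) : ℂ) - (inner ℂ (S ξ) (Td η) : ℂ) = (inner ℂ (ξ : H) (η : H) : ℂ))
    (ξ₀ : D) (hξ₀ : (ξ₀ : H) ≠ 0) (hSξ₀ : S ξ₀ = 0) :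
    T ξ₀ ≠ 0 ∧
    -- ⟨Tξ₀, S†η⟩ = ⟨ξ₀, η⟩ for every η ∈ D
    (∀ η : D, (inner ℂ (T ξ₀) (Sd η) : ℂ) = inner ℂ (ξ₀ : H) (η : H)) ∧
    -- Tξ₀ ∈ D((S†)*) with (S†)*(Tξ₀) = ξ₀
    (∀ η : D, (inner ℂ (Sd η) (T ξ₀) : ℂ) = inner ℂ (η : H) (ξ₀ : H)) ∧
    -- hence T((S†)*(Tξ₀)) = Tξ₀ : Tξ₀ is an eigenvector of T(S†)* with eigenvalue 1
    (∃ v : D, (v : H) = (ξ₀ : H) ∧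
      (∀ η : D, (inner ℂ (Sd η) (T ξ₀) : ℂ) = inner ℂ (η : H) (v : H)) ∧
      T v = (1 : ℂ) • T ξ₀) :=
  eigenvector_of_kernel_vector_general D hD S Sd T Td hCR ξ₀ hξ₀ hSξ₀
end

section
/- Let S, T ∈ L†(D,H) satisfy the weak commutation relation [S,T] = 1_D. Let n ≥ 1 and assume there exists a nonzero ξ₀ ∈ D with Sξ₀ = 0 such that the iterated vectors Tξ₀, T²ξ₀, …, T^{n−1}ξ₀ all belong to D. Then ⟨T^n ξ₀, S†η⟩ = n⟨T^{n−1}ξ₀, η⟩ for every η ∈ D; in particular T^n ξ₀ ∈ D((S†)*) with (S†)*(T^n ξ₀) = n T^{n−1}ξ₀ (so T^{n−1}ξ₀ is an eigenvector of (S†)*T with eigenvalue n), and T((S†)*(T^n ξ₀)) = n T^n ξ₀ (so T^n ξ₀ is an eigenvector of T(S†)* with eigenvalue n). -/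
/-!
Write `ξₖ = Tᵏ ξ₀`. The commutation relation says that whenever `S ξ` behaves weakly like
`c • ξ` against the range of `T†`, the vector `T ξ` behaves weakly like `(c + 1) • ξ` against the
range of `S†`; by density the latter pins down `S (T ξ) = (c + 1) • ξ` exactly, and pairing with
`T†` turns this back into the hypothesis for `T ξ` with constant `c + 1`. Starting from
`S ξ₀ = 0` this climbs the ladder `S ξₖ = k • ξₖ₋₁`, and one last application of the
commutation relation gives `⟨T ξₙ₋₁, S† η⟩ = n ⟨ξₙ₋₁, η⟩`.
-/

open scoped InnerProductSpace

section Ladder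

variable {H : Type*} [NormedAddCommGroup H] [InnerProductSpace ℂ H] {D : Submodule ℂ H}
  {S Sd T Td : D →ₗ[ℂ] H}

theorem inner_apply_adjoint_succ_of_commutator
    (hCR : ∀ ξ η : D, ⟪T ξ, Sd η⟫_ℂ - ⟪S ξ, Td η⟫_ℂ = ⟪(ξ : H), (η : H)⟫_ℂ)
    {ξ : D} {c : ℂ} (h : ∀ η : D, ⟪S ξ, Td η⟫_ℂ = ⟪c • (ξ : H), (η : H)⟫_ℂ) (η : D) :
    ⟪T ξ, Sd η⟫_ℂ = ⟪(c + 1) • (ξ : H), (η : H)⟫_ℂ := by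
  rw [add_smul, one_smul, inner_add_left, ← h, ← hCR]
  ring

theorem apply_eq_smul_of_inner_adjoint (hD : Dense (D : Set H))
    (hS : ∀ ξ η : D, ⟪S ξ, (η : H)⟫_ℂ = ⟪(ξ : H), Sd η⟫_ℂ)
    {ξ ξ' : D} (hξ' : (ξ' : H) = T ξ) {c : ℂ}
    (h : ∀ η : D, ⟪T ξ, Sd η⟫_ℂ = ⟪c • (ξ : H), (η : H)⟫_ℂ) :
    S ξ' = c • (ξ : H) := by
  refine hD.eq_of_inner_left ℂ fun η hη => ?_
  lift η to D using hη
  rw [hS, hξ', h]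

theorem inner_apply_adjoint_of_apply_eq_smul
    (hT : ∀ ξ η : D, ⟪T ξ, (η : H)⟫_ℂ = ⟪(ξ : H), Td η⟫_ℂ)
    {ξ ξ' : D} (hξ' : (ξ' : H) = T ξ) {c : ℂ} (h : S ξ' = c • (ξ : H)) (η : D) :
    ⟪S ξ', Td η⟫_ℂ = ⟪c • (ξ' : H), (η : H)⟫_ℂ := by
  rw [h, inner_smul_left, inner_smul_left, ← hT, hξ']

end Ladder

theorem eigenvectors_of_number_operator_general
    {H : Type*} [NormedAddCommGroup H] [InnerProductSpace ℂ H]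
    (D : Submodule ℂ H) (hD : Dense (D : Set H))
    (S Sd T Td : D →ₗ[ℂ] H)
    (hS : ∀ ξ η : D, (inner ℂ (S ξ) (η : H) : ℂ) = inner ℂ (ξ : H) (Sd η))
    (hT : ∀ ξ η : D, (inner ℂ (T ξ) (η : H) : ℂ) = inner ℂ (ξ : H) (Td η))
    (hCR : ∀ ξ η : D,
      (inner ℂ (T ξ) (Sd η) : ℂ) - (inner ℂ (S ξ) (Td η) : ℂ) = (inner ℂ (ξ : H) (η : H) : ℂ))
    (n : ℕ) (hn : 1 ≤ n)
    (ξ₀ : D) (hSξ₀ : S ξ₀ = 0)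
    -- the iterated vectors T^k ξ₀ (k ≤ n−1) all belong to D:
    (ξseq : ℕ → D) (hseq0 : ξseq 0 = ξ₀)
    (hseq : ∀ k : ℕ, k + 1 < n → (ξseq (k + 1) : H) = T (ξseq k)) :
    -- ⟨T^n ξ₀, S†η⟩ = n ⟨T^{n−1} ξ₀, η⟩ for every η ∈ D
    (∀ η : D, (inner ℂ (T (ξseq (n - 1))) (Sd η) : ℂ)
        = (n : ℂ) * inner ℂ ((ξseq (n - 1) : H)) (η : H)) ∧
    -- T^n ξ₀ ∈ D((S†)*) with (S†)*(T^n ξ₀) = n T^{n−1} ξ₀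
    -- (so T^{n−1}ξ₀ is an eigenvector of (S†)*T with eigenvalue n)
    (∀ η : D, (inner ℂ (Sd η) (T (ξseq (n - 1))) : ℂ)
        = inner ℂ (η : H) ((n : ℂ) • (ξseq (n - 1) : H))) ∧
    -- T((S†)*(T^n ξ₀)) = n T^n ξ₀ : T^n ξ₀ is an eigenvector of T(S†)* with eigenvalue n
    T ((n : ℂ) • ξseq (n - 1)) = (n : ℂ) • T (ξseq (n - 1)) := by
  have ladder : ∀ k, k ≤ n - 1 →
      ∀ η : D, ⟪S (ξseq k), Td η⟫_ℂ = ⟪(k : ℂ) • (ξseq k : H), (η : H)⟫_ℂ := by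
    intro k
    induction k with
    | zero => simp [hseq0, hSξ₀]
    | succ k ih =>
      intro hk
      have hξ := hseq k (by omega)
      have hS_succ := apply_eq_smul_of_inner_adjoint hD hS hξ
        (inner_apply_adjoint_succ_of_commutator hCR (ih (by omega)))
      exact_mod_cast inner_apply_adjoint_of_apply_eq_smul hT hξ hS_succ
  have top : ∀ η : D, ⟪T (ξseq (n - 1)), Sd η⟫_ℂ = (n : ℂ) * ⟪(ξseq (n - 1) : H), (η : H)⟫_ℂ := by
    intro η
    have := inner_apply_adjoint_succ_of_commutator hCR (ladder (n - 1) le_rfl) η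
    rwa [← Nat.cast_add_one, Nat.sub_add_cancel hn, inner_smul_left, Complex.conj_natCast] at this
  refine ⟨top, fun η => ?_, map_smul T _ _⟩
  rw [← inner_conj_symm, top, inner_smul_right, map_mul, Complex.conj_natCast, inner_conj_symm]

theorem eigenvectors_of_number_operator
    {H : Type*} [NormedAddCommGroup H] [InnerProductSpace ℂ H]
    (D : Submodule ℂ H) (hD : Dense (D : Set H))
    (S Sd T Td : D →ₗ[ℂ] H)
    (hS : ∀ ξ η : D, (inner ℂ (S ξ) (η : H) : ℂ) = inner ℂ (ξ : H) (Sd η))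
    (hT : ∀ ξ η : D, (inner ℂ (T ξ) (η : H) : ℂ) = inner ℂ (ξ : H) (Td η))
    (hCR : ∀ ξ η : D,
      (inner ℂ (T ξ) (Sd η) : ℂ) - (inner ℂ (S ξ) (Td η) : ℂ) = (inner ℂ (ξ : H) (η : H) : ℂ))
    (n : ℕ) (hn : 1 ≤ n)
    (ξ₀ : D) (hξ₀ : (ξ₀ : H) ≠ 0) (hSξ₀ : S ξ₀ = 0)
    -- the iterated vectors T^k ξ₀ (k ≤ n−1) all belong to D:
    (ξseq : ℕ → D) (hseq0 : ξseq 0 = ξ₀)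
    (hseq : ∀ k : ℕ, k + 1 < n → (ξseq (k + 1) : H) = T (ξseq k)) :
    -- ⟨T^n ξ₀, S†η⟩ = n ⟨T^{n−1} ξ₀, η⟩ for every η ∈ D
    (∀ η : D, (inner ℂ (T (ξseq (n - 1))) (Sd η) : ℂ)
        = (n : ℂ) * inner ℂ ((ξseq (n - 1) : H)) (η : H)) ∧
    -- T^n ξ₀ ∈ D((S†)*) with (S†)*(T^n ξ₀) = n T^{n−1} ξ₀
    -- (so T^{n−1}ξ₀ is an eigenvector of (S†)*T with eigenvalue n)
    (∀ η : D, (inner ℂ (Sd η) (T (ξseq (n - 1))) : ℂ)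
        = inner ℂ (η : H) ((n : ℂ) • (ξseq (n - 1) : H))) ∧
    -- T((S†)*(T^n ξ₀)) = n T^n ξ₀ : T^n ξ₀ is an eigenvector of T(S†)* with eigenvalue n
    T ((n : ℂ) • ξseq (n - 1)) = (n : ℂ) • T (ξseq (n - 1)) :=
  eigenvectors_of_number_operator_general D hD S Sd T Td hS hT hCR n hn ξ₀ hSξ₀ ξseq hseq0 hseq
end

section
/- Let S, T ∈ L†(D,H) satisfy the weak commutation relation [S,T] = 1_D. Let ξ ∈ D and n ≥ 1, and assume that T^j ξ ∈ D for all j ≤ n. Then for every k with 1 ≤ k ≤ n, Sξ belongs to the domain of ((T†)*)^k; more precisely, there exists a finite sequence ζ₀, ζ₁, …, ζ_k ∈ H with ζ₀ = Sξ and ⟨T†η, ζ_{j−1}⟩ = ⟨η, ζ_j⟩ for all η ∈ D and 1 ≤ j ≤ k (i.e. ζ_j = (T†)*ζ_{j−1}), and S(T^k ξ) − ζ_k = k T^{k−1} ξ. -/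
/-! The vectors `ζ j := S (T^j ξ) - j • T^(j-1) ξ` witness the claim. Moving `S` across with its
formal adjoint and applying `[S,T] = 1` gives `⟪η, S (T ξ')⟫ = ⟪T† η, S ξ'⟫ + ⟪η, ξ'⟫`, and the
correction term `j • T^(j-1) ξ` absorbs the extra `⟪η, ξ'⟫` at each step. -/

section WeakCommutation

variable {H : Type*} [NormedAddCommGroup H] [InnerProductSpace ℂ H] {D : Submodule ℂ H}
  {S Sd T Td : D →ₗ[ℂ] H}

theorem inner_formalAdjoint_left
    (hT : ∀ ξ η : D, inner ℂ (T ξ) (η : H) = inner ℂ (ξ : H) (Td η)) (ξ η : D) :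
    inner ℂ (Td η) (ξ : H) = inner ℂ (η : H) (T ξ) := by
  rw [← inner_conj_symm, ← hT, inner_conj_symm]

theorem inner_apply_of_coe_eq_apply
    (hS : ∀ ξ η : D, inner ℂ (S ξ) (η : H) = inner ℂ (ξ : H) (Sd η))
    (hCR : ∀ ξ η : D,
      inner ℂ (T ξ) (Sd η) - inner ℂ (S ξ) (Td η) = inner ℂ (ξ : H) (η : H))
    {ξ ξ' : D} (hξ' : (ξ' : H) = T ξ) (η : D) :
    inner ℂ (η : H) (S ξ') = inner ℂ (Td η) (S ξ) + inner ℂ (η : H) (ξ : H) := by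
  have h : inner ℂ (S ξ') (η : H) = inner ℂ (S ξ) (Td η) + inner ℂ (ξ : H) (η : H) := by
    rw [hS, hξ', ← hCR]
    ring
  rw [← inner_conj_symm, h, map_add, inner_conj_symm, inner_conj_symm]

/-- The factor `m` kills the junk value `ξseq (0 - 1) = ξseq 0` at `m = 0`. -/
theorem natCast_mul_inner_formalAdjoint_pred
    (hT : ∀ ξ η : D, inner ℂ (T ξ) (η : H) = inner ℂ (ξ : H) (Td η))
    {n : ℕ} {ξseq : ℕ → D} (hseq : ∀ j < n, (ξseq (j + 1) : H) = T (ξseq j))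
    {m : ℕ} (hm : m ≤ n) (η : D) :
    (m : ℂ) * inner ℂ (Td η) (ξseq (m - 1) : H) = m * inner ℂ (η : H) (ξseq m : H) := by
  rcases m with _ | l
  · simp
  · rw [Nat.add_sub_cancel, inner_formalAdjoint_left hT, ← hseq l (by omega)]

theorem inner_formalAdjoint_corrected_apply
    (hS : ∀ ξ η : D, inner ℂ (S ξ) (η : H) = inner ℂ (ξ : H) (Sd η))
    (hT : ∀ ξ η : D, inner ℂ (T ξ) (η : H) = inner ℂ (ξ : H) (Td η))
    (hCR : ∀ ξ η : D,
      inner ℂ (T ξ) (Sd η) - inner ℂ (S ξ) (Td η) = inner ℂ (ξ : H) (η : H))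
    {n : ℕ} {ξseq : ℕ → D} (hseq : ∀ j < n, (ξseq (j + 1) : H) = T (ξseq j))
    {m : ℕ} (hm : m < n) (η : D) :
    inner ℂ (Td η) (S (ξseq m) - (m : ℂ) • (ξseq (m - 1) : H)) =
      inner ℂ (η : H) (S (ξseq (m + 1)) - ((m + 1 : ℕ) : ℂ) • (ξseq m : H)) := by
  rw [inner_sub_right, inner_sub_right, inner_smul_right, inner_smul_right,
    natCast_mul_inner_formalAdjoint_pred hT hseq hm.le,
    inner_apply_of_coe_eq_apply hS hCR (hseq m hm)]
  push_cast
  ring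

end WeakCommutation

theorem commutator_power_formula_general
    {H : Type*} [NormedAddCommGroup H] [InnerProductSpace ℂ H]
    (D : Submodule ℂ H)
    (S Sd T Td : D →ₗ[ℂ] H)
    (hS : ∀ ξ η : D, (inner ℂ (S ξ) (η : H) : ℂ) = inner ℂ (ξ : H) (Sd η))
    (hT : ∀ ξ η : D, (inner ℂ (T ξ) (η : H) : ℂ) = inner ℂ (ξ : H) (Td η))
    (hCR : ∀ ξ η : D,
      (inner ℂ (T ξ) (Sd η) : ℂ) - (inner ℂ (S ξ) (Td η) : ℂ) = (inner ℂ (ξ : H) (η : H) : ℂ))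
    (n : ℕ) (ξ : D)
    -- T^j ξ ∈ D for all j ≤ n, encoded by ξseq with ξseq j = T^j ξ:
    (ξseq : ℕ → D) (hseq0 : ξseq 0 = ξ)
    (hseq : ∀ j : ℕ, j < n → (ξseq (j + 1) : H) = T (ξseq j)) :
    ∀ k : ℕ, 1 ≤ k → k ≤ n →
      ∃ ζ : ℕ → H,
        ζ 0 = S ξ ∧
        (∀ j : ℕ, 1 ≤ j → j ≤ k →
          ∀ η : D, (inner ℂ (Td η) (ζ (j - 1)) : ℂ) = inner ℂ (η : H) (ζ j)) ∧
        S (ξseq k) - ζ k = (k : ℂ) • (ξseq (k - 1) : H) := by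
  intro k _ hkn
  refine ⟨fun j => S (ξseq j) - (j : ℂ) • (ξseq (j - 1) : H), by simp [hseq0], ?_,
    sub_sub_cancel _ _⟩
  intro j hj hjk η
  obtain ⟨m, rfl⟩ : ∃ m, j = m + 1 := ⟨j - 1, by omega⟩
  exact inner_formalAdjoint_corrected_apply hS hT hCR hseq (by omega) η

theorem commutator_power_formula
    {H : Type*} [NormedAddCommGroup H] [InnerProductSpace ℂ H]
    (D : Submodule ℂ H) (hD : Dense (D : Set H))
    (S Sd T Td : D →ₗ[ℂ] H)
    (hS : ∀ ξ η : D, (inner ℂ (S ξ) (η : H) : ℂ) = inner ℂ (ξ : H) (Sd η))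
    (hT : ∀ ξ η : D, (inner ℂ (T ξ) (η : H) : ℂ) = inner ℂ (ξ : H) (Td η))
    (hCR : ∀ ξ η : D,
      (inner ℂ (T ξ) (Sd η) : ℂ) - (inner ℂ (S ξ) (Td η) : ℂ) = (inner ℂ (ξ : H) (η : H) : ℂ))
    (n : ℕ) (hn : 1 ≤ n) (ξ : D)
    -- T^j ξ ∈ D for all j ≤ n, encoded by ξseq with ξseq j = T^j ξ:
    (ξseq : ℕ → D) (hseq0 : ξseq 0 = ξ)
    (hseq : ∀ j : ℕ, j < n → (ξseq (j + 1) : H) = T (ξseq j)) :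
    ∀ k : ℕ, 1 ≤ k → k ≤ n →
      ∃ ζ : ℕ → H,
        ζ 0 = S ξ ∧
        (∀ j : ℕ, 1 ≤ j → j ≤ k →
          ∀ η : D, (inner ℂ (Td η) (ζ (j - 1)) : ℂ) = inner ℂ (η : H) (ζ j)) ∧
        S (ξseq k) - ζ k = (k : ℂ) • (ξseq (k - 1) : H) :=
  commutator_power_formula_general D S Sd T Td hS hT hCR n ξ ξseq hseq0 hseq
end

section
/- Let S, T ∈ L†(D,H) satisfy the weak commutation relation [S,T] = 1_D. Let n ≥ 1 and assume there exists a nonzero ξ₀ ∈ D with Sξ₀ = 0 such that the iterated vectors Tξ₀, T²ξ₀, …, T^{n−1}ξ₀ all belong to D. Then the vectors ξ₀, Tξ₀, T²ξ₀, …, T^n ξ₀ are linearly independent in H. -/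
/-!
Write `ξₖ = Tᵏ ξ₀`. The commutation relation makes `S` a lowering operator: `S ξₖ = k ξₖ₋₁` for
`k < n`, and the same holds weakly, paired against `S†η`, for `Tⁿ ξ₀`, which need not lie in `D`.
Pairing a vanishing combination `∑ cₖ ξₖ` with `S†η` and using the density of `D` gives
`∑ k cₖ ξₖ₋₁ = 0`, so induction on the length of the combination kills `c₁, …, cₙ`, and then
`c₀ ξ₀ = 0` forces `c₀ = 0`.
-/

open scoped InnerProductSpace ComplexConjugate

section Lowering

variable {K V W : Type*} [Field K] [AddCommGroup V] [Module K V] [AddCommGroup W] [Module K W]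

theorem linearIndependent_finSucc_of_map_eq_zero {m : ℕ} {v : Fin (m + 1) → V}
    (f : V →ₗ[K] W) (hv : LinearIndependent K (f ∘ Fin.tail v)) (hv0 : v 0 ≠ 0)
    (hfv0 : f (v 0) = 0) : LinearIndependent K v :=
  linearIndependent_finSucc.2
    ⟨hv.of_comp, fun h => hv0 ((Submodule.range_ker_disjoint hv).le_bot ⟨h, hfv0⟩)⟩

theorem linearIndependent_of_lowering [CharZero K] (A B : V →ₗ[K] W)
    (hB : Function.Injective B) {w : ℕ → V} (hw0 : w 0 ≠ 0) (hAw0 : A (w 0) = 0) {m : ℕ}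
    (hAw : ∀ k < m, A (w (k + 1)) = ((k : K) + 1) • B (w k)) :
    LinearIndependent K (fun k : Fin (m + 1) => w k) := by
  induction m with
  | zero => exact linearIndependent_finSucc_of_map_eq_zero A linearIndependent_empty_type hw0 hAw0
  | succ m ih =>
    refine linearIndependent_finSucc_of_map_eq_zero A ?_ hw0 hAw0
    have hAtail : A ∘ Fin.tail (fun k : Fin (m + 2) => w k) =
        fun k : Fin (m + 1) => ((k : K) + 1) • B (w k) :=
      funext fun k => hAw k k.2
    rw [hAtail]
    exact ((ih fun k hk => hAw k (hk.trans m.lt_succ_self)).map' B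
      (LinearMap.ker_eq_bot.2 hB)).units_smul fun k => Units.mk0 _ (Nat.cast_add_one_ne_zero k)

end Lowering

theorem Dense.injective_pi_innerₛₗ {𝕜 E : Type*} [RCLike 𝕜] [NormedAddCommGroup E]
    [InnerProductSpace 𝕜 E] {D : Submodule 𝕜 E} (hD : Dense (D : Set E)) :
    Function.Injective (LinearMap.pi fun η : D => innerₛₗ 𝕜 (η : E)) := fun _ _ hxy =>
  hD.eq_of_inner_right 𝕜 fun η hη => congr_fun hxy ⟨η, hη⟩

section WeakCommutation

variable {H : Type*} [NormedAddCommGroup H] [InnerProductSpace ℂ H] {D : Submodule ℂ H}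
  {S Sd T Td : D →ₗ[ℂ] H}

theorem inner_T_Sd_eq_succ_mul_inner
    (hT : ∀ ξ η : D, ⟪T ξ, (η : H)⟫_ℂ = ⟪(ξ : H), Td η⟫_ℂ)
    (hCR : ∀ ξ η : D, ⟪T ξ, Sd η⟫_ℂ - ⟪S ξ, Td η⟫_ℂ = ⟪(ξ : H), (η : H)⟫_ℂ)
    {n : ℕ} {ξ : ℕ → D} (hξ0 : S (ξ 0) = 0)
    (hξ : ∀ k : ℕ, k + 1 < n → (ξ (k + 1) : H) = T (ξ k))
    {k : ℕ} (hk : k < n) (hSξ : S (ξ k) = (k : ℂ) • (ξ (k - 1) : H)) (η : D) :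
    ⟪T (ξ k), Sd η⟫_ℂ = ((k : ℂ) + 1) * ⟪(ξ k : H), (η : H)⟫_ℂ := by
  have hS_Td : ⟪S (ξ k), Td η⟫_ℂ = k * ⟪(ξ k : H), (η : H)⟫_ℂ := by
    cases k with
    | zero => simp [hξ0]
    | succ j =>
      rw [hSξ, Nat.add_sub_cancel, inner_smul_left, ← hT, ← hξ j hk]
      simp
  linear_combination hCR (ξ k) η + hS_Td

theorem S_apply_eq_natCast_smul_pred (hD : Dense (D : Set H))
    (hS : ∀ ξ η : D, ⟪S ξ, (η : H)⟫_ℂ = ⟪(ξ : H), Sd η⟫_ℂ)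
    (hT : ∀ ξ η : D, ⟪T ξ, (η : H)⟫_ℂ = ⟪(ξ : H), Td η⟫_ℂ)
    (hCR : ∀ ξ η : D, ⟪T ξ, Sd η⟫_ℂ - ⟪S ξ, Td η⟫_ℂ = ⟪(ξ : H), (η : H)⟫_ℂ)
    {n : ℕ} {ξ : ℕ → D} (hξ0 : S (ξ 0) = 0)
    (hξ : ∀ k : ℕ, k + 1 < n → (ξ (k + 1) : H) = T (ξ k)) :
    ∀ k < n, S (ξ k) = (k : ℂ) • (ξ (k - 1) : H)
  | 0, _ => by simp [hξ0]
  | k + 1, hk => by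
    have ih := S_apply_eq_natCast_smul_pred hD hS hT hCR hξ0 hξ k (by omega)
    refine hD.eq_of_inner_left ℂ fun η hη => ?_
    rw [hS _ ⟨η, hη⟩, hξ k hk, inner_T_Sd_eq_succ_mul_inner hT hCR hξ0 hξ (by omega) ih]
    simp [inner_smul_left]

end WeakCommutation

theorem iterated_vectors_linearIndependent
    {H : Type*} [NormedAddCommGroup H] [InnerProductSpace ℂ H]
    (D : Submodule ℂ H) (hD : Dense (D : Set H))
    (S Sd T Td : D →ₗ[ℂ] H)
    (hS : ∀ ξ η : D, (inner ℂ (S ξ) (η : H) : ℂ) = inner ℂ (ξ : H) (Sd η))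
    (hT : ∀ ξ η : D, (inner ℂ (T ξ) (η : H) : ℂ) = inner ℂ (ξ : H) (Td η))
    (hCR : ∀ ξ η : D,
      (inner ℂ (T ξ) (Sd η) : ℂ) - (inner ℂ (S ξ) (Td η) : ℂ) = (inner ℂ (ξ : H) (η : H) : ℂ))
    (n : ℕ) (hn : 1 ≤ n)
    (ξ₀ : D) (hξ₀ : (ξ₀ : H) ≠ 0) (hSξ₀ : S ξ₀ = 0)
    -- the iterated vectors T^k ξ₀ (k ≤ n−1) all belong to D:
    (ξseq : ℕ → D) (hseq0 : ξseq 0 = ξ₀)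
    (hseq : ∀ k : ℕ, k + 1 < n → (ξseq (k + 1) : H) = T (ξseq k)) :
    -- ξ₀, Tξ₀, …, T^{n−1}ξ₀, T^n ξ₀ are linearly independent in H
    LinearIndependent ℂ
      (fun k : Fin (n + 1) =>
        if (k : ℕ) < n then ((ξseq (k : ℕ) : H)) else T (ξseq (n - 1))) := by
  subst hseq0
  set w : ℕ → H := fun k => if k < n then (ξseq k : H) else T (ξseq (n - 1))
  have hw0 : w 0 = ξseq 0 := if_pos hn
  have hw_succ (k : ℕ) (hk : k < n) : w (k + 1) = T (ξseq k) := by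
    by_cases hk' : k + 1 < n
    · exact (if_pos hk').trans (hseq k hk')
    · rw [show k = n - 1 by omega]
      exact if_neg (by omega)
  let A : H →ₗ[ℂ] D → ℂ := LinearMap.pi fun η => innerₛₗ ℂ (Sd η : H)
  let B : H →ₗ[ℂ] D → ℂ := LinearMap.pi fun η => innerₛₗ ℂ (η : H)
  have hAw0 : A (w 0) = 0 := funext fun η => by
    simp only [A, hw0, LinearMap.pi_apply, innerₛₗ_apply_apply, Pi.zero_apply]
    rw [← inner_conj_symm, ← hS, hSξ₀, inner_zero_left, map_zero]
  refine linearIndependent_of_lowering A B hD.injective_pi_innerₛₗ (hw0 ▸ hξ₀) hAw0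
    fun k hk => funext fun η => ?_
  have hS_k := S_apply_eq_natCast_smul_pred hD hS hT hCR hSξ₀ hseq k hk
  simp only [A, B, LinearMap.pi_apply, innerₛₗ_apply_apply, Pi.smul_apply, smul_eq_mul,
    hw_succ k hk, show w k = ξseq k from if_pos hk]
  rw [← inner_conj_symm, inner_T_Sd_eq_succ_mul_inner hT hCR hSξ₀ hseq hk hS_k, map_mul,
    inner_conj_symm]
  simp
end

section
/- Let S, T ∈ L†(D,H) satisfy the weak commutation relation [S,T] = 1_D. Let n ≥ 1 and assume there exists a nonzero ξ₀ ∈ D with Sξ₀ = 0 such that Tξ₀, T²ξ₀, …, T^{n−1}ξ₀ all belong to D. Let N₀ be the linear span of {ξ₀, Tξ₀, …, T^n ξ₀}; the operator (T(S†)*)₀ acts on N₀ by sending Σ_{k=0}^n μ_k T^k ξ₀ to Σ_{k=0}^n k μ_k T^k ξ₀. Then the point spectrum of (T(S†)*)₀ consists exactly of the numbers {0, 1, …, n}, and each eigenvalue is simple: if μ₀, …, μ_n ∈ ℂ are not all zero, λ ∈ ℂ, and Σ_{k=0}^n k μ_k T^k ξ₀ = λ Σ_{k=0}^n μ_k T^k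 ξ₀, then there exists m ∈ {0, 1, …, n} with λ = m and μ_j = 0 for every j ≠ m. -/
/-!
The commutation relation makes `S†` act weakly as a lowering operator along the ladder
`ξ₀, Tξ₀, …, Tⁿξ₀`: `⟪T^k ξ₀, S† η⟫ = k ⟪T^(k-1) ξ₀, η⟫`. Pairing a vanishing combination
`∑ c_k T^k ξ₀` with `S† η` and using density of `D` yields the vanishing combination
`∑ k c_k T^(k-1) ξ₀`, so by induction the ladder vectors are linearly independent. On a linearly
independent family the diagonal map `T^k ξ₀ ↦ k T^k ξ₀` has exactly the eigenvalues `0, …, n`,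
each with the single ladder vector as its only eigenvector up to scaling.
-/

open scoped InnerProductSpace
open Finset

section FormalAdjoint

variable {H : Type*} [NormedAddCommGroup H] [InnerProductSpace ℂ H] {D : Submodule ℂ H}
  {S Sd T Td : D → H}

theorem eq_of_inner_formalAdjoint_eq (hD : Dense (D : Set H))
    (hS : ∀ ξ η : D, ⟪S ξ, (η : H)⟫_ℂ = ⟪(ξ : H), Sd η⟫_ℂ) {ξ : D} {x : H}
    (h : ∀ η : D, ⟪(ξ : H), Sd η⟫_ℂ = ⟪x, η⟫_ℂ) : S ξ = x :=
  hD.eq_of_inner_left ℂ fun v hv => (hS ξ ⟨v, hv⟩).trans (h ⟨v, hv⟩)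

theorem inner_apply_formalAdjoint_of_eq_smul
    (hT : ∀ ξ η : D, ⟪T ξ, (η : H)⟫_ℂ = ⟪(ξ : H), Td η⟫_ℂ)
    (hCR : ∀ ξ η : D, ⟪T ξ, Sd η⟫_ℂ - ⟪S ξ, Td η⟫_ℂ = ⟪(ξ : H), (η : H)⟫_ℂ)
    {ξ ζ : D} {c : ℕ} (hSξ : S ξ = (c : ℂ) • (ζ : H)) (η : D) :
    ⟪T ξ, Sd η⟫_ℂ = c * ⟪T ζ, (η : H)⟫_ℂ + ⟪(ξ : H), η⟫_ℂ := by
  rw [← sub_eq_iff_eq_add, hT, ← hCR ξ η, hSξ, inner_smul_left, Complex.conj_natCast]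
  ring

theorem inner_apply_formalAdjoint_ladder (hD : Dense (D : Set H))
    (hS : ∀ ξ η : D, ⟪S ξ, (η : H)⟫_ℂ = ⟪(ξ : H), Sd η⟫_ℂ)
    (hT : ∀ ξ η : D, ⟪T ξ, (η : H)⟫_ℂ = ⟪(ξ : H), Td η⟫_ℂ)
    (hCR : ∀ ξ η : D, ⟪T ξ, Sd η⟫_ℂ - ⟪S ξ, Td η⟫_ℂ = ⟪(ξ : H), (η : H)⟫_ℂ)
    {ξ : ℕ → D} {n : ℕ} (hS₀ : S (ξ 0) = 0) (hξ : ∀ k, k + 1 < n → (ξ (k + 1) : H) = T (ξ k)) :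
    ∀ k < n, ∀ η : D, ⟪T (ξ k), Sd η⟫_ℂ = (k + 1 : ℂ) * ⟪(ξ k : H), η⟫_ℂ := by
  intro k
  induction k with
  | zero =>
    intro _ η
    simpa using inner_apply_formalAdjoint_of_eq_smul hT hCR (c := 0) (ζ := ξ 0) (by simp [hS₀]) η
  | succ k ih =>
    intro hk η
    have hSk : S (ξ (k + 1)) = ((k + 1 : ℕ) : ℂ) • (ξ k : H) :=
      eq_of_inner_formalAdjoint_eq hD hS fun η => by
        rw [hξ k hk, ih (by omega) η, inner_smul_left]
        simp
    rw [inner_apply_formalAdjoint_of_eq_smul hT hCR hSk η, ← hξ k hk]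
    push_cast
    ring

theorem linearIndependent_of_inner_lowering (hD : Dense (D : Set H)) (A : D → H) {v : ℕ → H}
    (hv₀ : v 0 ≠ 0) (hA₀ : ∀ η : D, ⟪v 0, A η⟫_ℂ = 0) (n : ℕ)
    (hA : ∀ k < n, ∀ η : D, ⟪v (k + 1), A η⟫_ℂ = (k + 1 : ℂ) * ⟪v k, η⟫_ℂ) :
    LinearIndependent ℂ (fun k : Fin (n + 1) => v k) := by
  induction n with
  | zero => exact (linearIndependent_unique_iff (ι := Fin 1)).mpr hv₀
  | succ n ih =>
    have ih := Fintype.linearIndependent_iff.mp (ih fun k hk => hA k (by omega))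
    refine Fintype.linearIndependent_iff.mpr fun g hg => ?_
    have hlowered : ∑ i : Fin (n + 1), (((i : ℕ) + 1 : ℂ) * g i.succ) • v i = 0 := by
      refine hD.eq_zero_of_inner_left ℂ fun η hη => ?_
      calc _ = ⟪∑ i : Fin (n + 2), g i • v i, A ⟨η, hη⟩⟫_ℂ := by
            rw [sum_inner, sum_inner, Fin.sum_univ_succ (n := n + 1), inner_smul_left, Fin.val_zero,
              hA₀, mul_zero, zero_add]
            refine sum_congr rfl fun i _ => ?_
            rw [inner_smul_left, inner_smul_left, Fin.val_succ, hA i i.is_lt]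
            simp only [map_mul, map_add, map_natCast, map_one]
            ring
        _ = 0 := by rw [hg, inner_zero_left]
    have htail : ∀ i : Fin (n + 1), g i.succ = 0 := fun i =>
      (mul_eq_zero.mp (ih _ hlowered i)).resolve_left (Nat.cast_add_one_ne_zero i)
    have hhead : g 0 = 0 := by
      rw [Fin.sum_univ_succ] at hg
      simpa [htail, hv₀] using hg
    exact fun i => Fin.cases hhead htail i

end FormalAdjoint

theorem LinearIndependent.eq_natCast_of_diagonal_eigen {K M : Type*} [Field K] [CharZero K]
    [AddCommGroup M] [Module K M] {v : ℕ → M} {n : ℕ}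
    (hv : LinearIndependent K (fun k : Fin (n + 1) => v k)) {μ : ℕ → K} {lam : K}
    (hμ : ∃ k ≤ n, μ k ≠ 0)
    (h : ∑ k ∈ range (n + 1), ((k : K) * μ k) • v k = lam • ∑ k ∈ range (n + 1), μ k • v k) :
    ∃ m ≤ n, lam = m ∧ ∀ j ≤ n, j ≠ m → μ j = 0 := by
  have hcoef : ∀ k ≤ n, ((k : K) - lam) * μ k = 0 := by
    intro k hk
    refine Fintype.linearIndependent_iff.mp hv (fun i => ((i : ℕ) - lam) * μ i) ?_ ⟨k, by omega⟩
    rw [← Finset.sum_range (fun k => (((k : K) - lam) * μ k) • v k)]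
    simp only [sub_mul, sub_smul, sum_sub_distrib]
    rw [h, smul_sum]
    simp only [mul_smul, sub_self]
  obtain ⟨m, hm, hμm⟩ := hμ
  have hlam : lam = m := (sub_eq_zero.mp ((mul_eq_zero.mp (hcoef m hm)).resolve_right hμm)).symm
  refine ⟨m, hm, hlam, fun j hj hjm => (mul_eq_zero.mp (hcoef j hj)).resolve_left ?_⟩
  rw [hlam, sub_eq_zero, Nat.cast_inj]
  exact hjm

theorem point_spectrum_of_restricted_number_operator
    {H : Type*} [NormedAddCommGroup H] [InnerProductSpace ℂ H]
    (D : Submodule ℂ H) (hD : Dense (D : Set H))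
    (S Sd T Td : D →ₗ[ℂ] H)
    (hS : ∀ ξ η : D, (inner ℂ (S ξ) (η : H) : ℂ) = inner ℂ (ξ : H) (Sd η))
    (hT : ∀ ξ η : D, (inner ℂ (T ξ) (η : H) : ℂ) = inner ℂ (ξ : H) (Td η))
    (hCR : ∀ ξ η : D,
      (inner ℂ (T ξ) (Sd η) : ℂ) - (inner ℂ (S ξ) (Td η) : ℂ) = (inner ℂ (ξ : H) (η : H) : ℂ))
    (n : ℕ) (hn : 1 ≤ n)
    (ξ₀ : D) (hξ₀ : (ξ₀ : H) ≠ 0) (hSξ₀ : S ξ₀ = 0)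
    -- the iterated vectors T^k ξ₀ (k ≤ n−1) all belong to D:
    (ξseq : ℕ → D) (hseq0 : ξseq 0 = ξ₀)
    (hseq : ∀ k : ℕ, k + 1 < n → (ξseq (k + 1) : H) = T (ξseq k))
    -- the vectors T^k ξ₀, k = 0, …, n:
    (vec : ℕ → H)
    (hvec : ∀ k : ℕ, vec k = if k < n then ((ξseq k : H)) else T (ξseq (n - 1))) :
    -- every m ∈ {0,…,n} is an eigenvalue of (T(S†)*)₀ ...
    (∀ m : ℕ, m ≤ n →
      ∃ μ : ℕ → ℂ, (∃ k ≤ n, μ k ≠ 0) ∧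
        ∑ k ∈ Finset.range (n + 1), ((k : ℂ) * μ k) • vec k
          = (m : ℂ) • ∑ k ∈ Finset.range (n + 1), μ k • vec k) ∧
    -- ... and these are the only eigenvalues, each of them simple:
    (∀ (μ : ℕ → ℂ) (lam : ℂ), (∃ k ≤ n, μ k ≠ 0) →
      ∑ k ∈ Finset.range (n + 1), ((k : ℂ) * μ k) • vec k
        = lam • ∑ k ∈ Finset.range (n + 1), μ k • vec k →
      ∃ m ≤ n, lam = (m : ℂ) ∧ ∀ j ≤ n, j ≠ m → μ j = 0) := by
  have hvec_lt : ∀ k < n, vec k = ξseq k := fun k hk => by rw [hvec, if_pos hk]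
  have hvec_succ : ∀ k < n, vec (k + 1) = T (ξseq k) := by
    intro k hk
    obtain h | rfl : k + 1 < n ∨ k + 1 = n := by omega
    · rw [hvec_lt _ h, hseq k h]
    · rw [hvec, if_neg (lt_irrefl _), Nat.add_sub_cancel]
  have hvec_zero : vec 0 = ξ₀ := by rw [hvec_lt 0 hn, hseq0]
  have hladder := inner_apply_formalAdjoint_ladder hD hS hT hCR (hseq0 ▸ hSξ₀) hseq
  have hli : LinearIndependent ℂ (fun k : Fin (n + 1) => vec k) := by
    refine linearIndependent_of_inner_lowering hD Sd (hvec_zero ▸ hξ₀) (fun η => ?_) n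
      fun k hk η => by rw [hvec_succ k hk, hladder k hk η, hvec_lt k hk]
    rw [hvec_zero, ← hS, hSξ₀, inner_zero_left]
  refine ⟨fun m hm => ⟨Pi.single m 1, ⟨m, hm, by simp⟩, ?_⟩,
    fun μ lam hμ h => hli.eq_natCast_of_diagonal_eigen hμ h⟩
  simp [Pi.single_apply, hm]
end

section
/- Let S, T ∈ L†(D,H) satisfy the weak commutation relation [S,T] = 1_D. Let ξ₀, η₀ ∈ D with Sξ₀ = 0, T†η₀ = 0 and ⟨ξ₀, η₀⟩ = 1. Let n, m ≥ 1 and assume that T^k ξ₀ ∈ D for all k ≤ n and (S†)^r η₀ ∈ D for all r ≤ m (iterated applications). Then the families {T^i ξ₀ / √(i!)} and {(S†)^j η₀ / √(j!)} are biorthogonal: for all 0 ≤ i ≤ n and 0 ≤ j ≤ m, ⟨T^i ξ₀, (S†)^j η₀⟩ = i!·δ_{ij} (equivalently, ⟨T^i ξ₀/√(i!), (S†)^j η₀/√(j!)⟩ = δ_{ij}). -/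
/-! The commutation relation makes `S` act as a lowering operator on the ladder
`ξₖ = Tᵏ ξ₀`: tested against the dense domain, `S ξₖ₊₁ = (k + 1) ξₖ`. Moving `S` across the
inner product as `S†` then gives `⟨ξₖ₊₁, ηⱼ₊₁⟩ = (k + 1) ⟨ξₖ, ηⱼ⟩`, while `S ξ₀ = 0` and
`T† η₀ = 0` kill the mixed terms on the boundary, so the Gram matrix is `diag(k!)`. -/

open scoped InnerProductSpace Nat

namespace WeakCommutation

variable {𝕜 H : Type*} [RCLike 𝕜] [NormedAddCommGroup H] [InnerProductSpace 𝕜 H]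
  {D : Submodule 𝕜 H} {S Sd T Td : D →ₗ[𝕜] H}

theorem inner_apply_eq_add_of_eq_apply
    (hCR : ∀ ξ η : D, ⟪T ξ, Sd η⟫_𝕜 - ⟪S ξ, Td η⟫_𝕜 = ⟪(ξ : H), (η : H)⟫_𝕜)
    (hS : ∀ ξ η : D, ⟪S ξ, (η : H)⟫_𝕜 = ⟪(ξ : H), Sd η⟫_𝕜)
    {ξ ξ' : D} (hξ' : (ξ' : H) = T ξ) (η : D) :
    ⟪S ξ', (η : H)⟫_𝕜 = ⟪S ξ, Td η⟫_𝕜 + ⟪(ξ : H), (η : H)⟫_𝕜 := by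
  rw [hS, hξ', ← hCR]
  ring

-- `hc` is the weak form of `S ξ = c ξ₋` for a `ξ₋` with `T ξ₋ = ξ`; it also covers `S ξ = 0`.
theorem apply_eq_add_one_smul (hD : Dense (D : Set H))
    (hCR : ∀ ξ η : D, ⟪T ξ, Sd η⟫_𝕜 - ⟪S ξ, Td η⟫_𝕜 = ⟪(ξ : H), (η : H)⟫_𝕜)
    (hS : ∀ ξ η : D, ⟪S ξ, (η : H)⟫_𝕜 = ⟪(ξ : H), Sd η⟫_𝕜)
    {ξ ξ' : D} (hξ' : (ξ' : H) = T ξ) {c : 𝕜}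
    (hc : ∀ η : D, ⟪S ξ, Td η⟫_𝕜 = ⟪c • (ξ : H), (η : H)⟫_𝕜) :
    S ξ' = (c + 1) • (ξ : H) :=
  hD.denseRange_val.eq_of_inner_left 𝕜 fun η => by
    rw [inner_apply_eq_add_of_eq_apply hCR hS hξ', hc, add_smul, one_smul, inner_add_left]

variable (hD : Dense (D : Set H))
  (hCR : ∀ ξ η : D, ⟪T ξ, Sd η⟫_𝕜 - ⟪S ξ, Td η⟫_𝕜 = ⟪(ξ : H), (η : H)⟫_𝕜)
  (hS : ∀ ξ η : D, ⟪S ξ, (η : H)⟫_𝕜 = ⟪(ξ : H), Sd η⟫_𝕜)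
  (hT : ∀ ξ η : D, ⟪T ξ, (η : H)⟫_𝕜 = ⟪(ξ : H), Td η⟫_𝕜)
  {n m : ℕ} {ξ η : ℕ → D}
  (hξ : ∀ k < n, (ξ (k + 1) : H) = T (ξ k)) (hη : ∀ r < m, (η (r + 1) : H) = Sd (η r))
  (hS₀ : S (ξ 0) = 0) (hTd₀ : Td (η 0) = 0)

include hD hCR hS hT hξ hS₀ in
theorem apply_succ_eq_natCast_smul : ∀ k < n, S (ξ (k + 1)) = ((k + 1 : ℕ) : 𝕜) • (ξ k : H)
  | 0, hk => by
    rw [Nat.cast_one, ← zero_add (1 : 𝕜)]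
    exact apply_eq_add_one_smul hD hCR hS (hξ 0 hk) fun η => by simp [hS₀]
  | k + 1, hk => by
    rw [Nat.cast_succ]
    refine apply_eq_add_one_smul hD hCR hS (hξ (k + 1) hk) fun η => ?_
    rw [apply_succ_eq_natCast_smul k (by omega), inner_smul_left, inner_smul_left, ← hT,
      ← hξ k (by omega)]

include hT hξ hTd₀ in
theorem inner_succ_zero {k : ℕ} (hk : k < n) : ⟪(ξ (k + 1) : H), (η 0 : H)⟫_𝕜 = 0 := by
  rw [hξ k hk, hT, hTd₀, inner_zero_right]

include hS hη hS₀ in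
theorem inner_zero_succ {r : ℕ} (hr : r < m) : ⟪(ξ 0 : H), (η (r + 1) : H)⟫_𝕜 = 0 := by
  rw [hη r hr, ← hS, hS₀, inner_zero_left]

include hD hCR hS hT hξ hη hS₀ in
theorem inner_succ_succ {k r : ℕ} (hk : k < n) (hr : r < m) :
    ⟪(ξ (k + 1) : H), (η (r + 1) : H)⟫_𝕜 = (k + 1 : 𝕜) * ⟪(ξ k : H), (η r : H)⟫_𝕜 := by
  rw [hη r hr, ← hS, apply_succ_eq_natCast_smul hD hCR hS hT hξ hS₀ k hk, inner_smul_left,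
    map_natCast, Nat.cast_succ]

include hD hCR hS hT hξ hη hS₀ hTd₀ in
theorem inner_eq_ite_factorial_mul :
    ∀ i ≤ n, ∀ j ≤ m,
      ⟪(ξ i : H), (η j : H)⟫_𝕜 = if i = j then (i ! : 𝕜) * ⟪(ξ 0 : H), (η 0 : H)⟫_𝕜 else 0
  | 0, _, 0, _ => by simp
  | 0, _, r + 1, hr => by simp [inner_zero_succ hS hη hS₀ hr]
  | k + 1, hk, 0, _ => by simp [inner_succ_zero hT hξ hTd₀ hk]
  | k + 1, hk, r + 1, hr => by
    rw [inner_succ_succ hD hCR hS hT hξ hη hS₀ hk hr,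
      inner_eq_ite_factorial_mul k (by omega) r (by omega)]
    by_cases hkr : k = r
    · simp [hkr, Nat.factorial_succ, mul_assoc]
    · simp [hkr]

end WeakCommutation

theorem biorthogonality_of_eigenvector_families_general
    {H : Type*} [NormedAddCommGroup H] [InnerProductSpace ℂ H]
    (D : Submodule ℂ H) (hD : Dense (D : Set H))
    (S Sd T Td : D →ₗ[ℂ] H)
    (hS : ∀ ξ η : D, (inner ℂ (S ξ) (η : H) : ℂ) = inner ℂ (ξ : H) (Sd η))
    (hT : ∀ ξ η : D, (inner ℂ (T ξ) (η : H) : ℂ) = inner ℂ (ξ : H) (Td η))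
    (hCR : ∀ ξ η : D,
      (inner ℂ (T ξ) (Sd η) : ℂ) - (inner ℂ (S ξ) (Td η) : ℂ) = (inner ℂ (ξ : H) (η : H) : ℂ))
    (n m : ℕ)
    (ξ₀ η₀ : D) (hSξ₀ : S ξ₀ = 0) (hTdη₀ : Td η₀ = 0)
    (hnorm : (inner ℂ (ξ₀ : H) (η₀ : H) : ℂ) = 1)
    -- T^k ξ₀ ∈ D for all k ≤ n:
    (ξseq : ℕ → D) (hξ0 : ξseq 0 = ξ₀)
    (hξs : ∀ k : ℕ, k < n → (ξseq (k + 1) : H) = T (ξseq k))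
    -- (S†)^r η₀ ∈ D for all r ≤ m:
    (ηseq : ℕ → D) (hη0 : ηseq 0 = η₀)
    (hηs : ∀ r : ℕ, r < m → (ηseq (r + 1) : H) = Sd (ηseq r)) :
    ∀ i ≤ n, ∀ j ≤ m,
      (inner ℂ (ξseq i : H) (ηseq j : H) : ℂ)
        = if i = j then (Nat.factorial i : ℂ) else 0 := by
  intro i hi j hj
  rw [WeakCommutation.inner_eq_ite_factorial_mul hD hCR hS hT hξs hηs (hξ0 ▸ hSξ₀)
    (hη0 ▸ hTdη₀) i hi j hj, hξ0, hη0, hnorm, mul_one]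

theorem biorthogonality_of_eigenvector_families
    {H : Type*} [NormedAddCommGroup H] [InnerProductSpace ℂ H]
    (D : Submodule ℂ H) (hD : Dense (D : Set H))
    (S Sd T Td : D →ₗ[ℂ] H)
    (hS : ∀ ξ η : D, (inner ℂ (S ξ) (η : H) : ℂ) = inner ℂ (ξ : H) (Sd η))
    (hT : ∀ ξ η : D, (inner ℂ (T ξ) (η : H) : ℂ) = inner ℂ (ξ : H) (Td η))
    (hCR : ∀ ξ η : D,
      (inner ℂ (T ξ) (Sd η) : ℂ) - (inner ℂ (S ξ) (Td η) : ℂ) = (inner ℂ (ξ : H) (η : H) : ℂ))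
    (n m : ℕ) (hn : 1 ≤ n) (hm : 1 ≤ m)
    (ξ₀ η₀ : D) (hSξ₀ : S ξ₀ = 0) (hTdη₀ : Td η₀ = 0)
    (hnorm : (inner ℂ (ξ₀ : H) (η₀ : H) : ℂ) = 1)
    -- T^k ξ₀ ∈ D for all k ≤ n:
    (ξseq : ℕ → D) (hξ0 : ξseq 0 = ξ₀)
    (hξs : ∀ k : ℕ, k < n → (ξseq (k + 1) : H) = T (ξseq k))
    -- (S†)^r η₀ ∈ D for all r ≤ m:
    (ηseq : ℕ → D) (hη0 : ηseq 0 = η₀)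
    (hηs : ∀ r : ℕ, r < m → (ηseq (r + 1) : H) = Sd (ηseq r)) :
    ∀ i ≤ n, ∀ j ≤ m,
      (inner ℂ (ξseq i : H) (ηseq j : H) : ℂ)
        = if i = j then (Nat.factorial i : ℂ) else 0 :=
  biorthogonality_of_eigenvector_families_general D hD S Sd T Td hS hT hCR n m ξ₀ η₀ hSξ₀ hTdη₀
    hnorm ξseq hξ0 hξs ηseq hη0 hηs
end

section
/- Let S, T ∈ L†(D,H) satisfy the weak commutation relation [S,T] = 1_D. Then for every ξ ∈ D with ‖ξ‖ = 1 and all z, w ∈ ℂ: 1 ≤ 2·max{‖Sξ − zξ‖, ‖S†ξ − z̄ξ‖}·max{‖Tξ − wξ‖, ‖T†ξ − w̄ξ‖}, i.e. ⟨ξ,ξ⟩ ≤ 2·max{(ΔS)_ξ(z), (ΔS†)_ξ(z̄)}·max{(ΔT)_ξ(w), (ΔT†)_ξ(w̄)}. -/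
open ComplexConjugate

section WeakCommutation

variable {H : Type*} [NormedAddCommGroup H] [InnerProductSpace ℂ H] {D : Submodule ℂ H}

def IsFormalAdjoint (S Sd : D →ₗ[ℂ] H) : Prop :=
  ∀ ξ η : D, inner ℂ (S ξ) (η : H) = inner ℂ (ξ : H) (Sd η)

/-- `[S, T] = 1_D` weakly, where `Sd`, `Td` play the roles of `S†`, `T†`. -/
def WeakCommRel (S Sd T Td : D →ₗ[ℂ] H) : Prop :=
  ∀ ξ η : D, inner ℂ (T ξ) (Sd η) - inner ℂ (S ξ) (Td η) = inner ℂ (ξ : H) (η : H)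

theorem WeakCommRel.sub_smul_subtype {S Sd T Td : D →ₗ[ℂ] H} (hS : IsFormalAdjoint S Sd)
    (hT : IsFormalAdjoint T Td) (hST : WeakCommRel S Sd T Td) (z w : ℂ) :
    WeakCommRel (S - z • D.subtype) (Sd - conj z • D.subtype)
      (T - w • D.subtype) (Td - conj w • D.subtype) := by
  intro ξ η
  simp only [LinearMap.sub_apply, LinearMap.smul_apply, Submodule.subtype_apply,
    inner_sub_left, inner_sub_right, inner_smul_left, inner_smul_right]
  linear_combination hST ξ η - conj z * hT ξ η + conj w * hS ξ η

theorem WeakCommRel.one_le_add_norm_mul_norm {S Sd T Td : D →ₗ[ℂ] H}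
    (hST : WeakCommRel S Sd T Td) {ξ : D} (hξ : ‖(ξ : H)‖ = 1) :
    1 ≤ ‖T ξ‖ * ‖Sd ξ‖ + ‖S ξ‖ * ‖Td ξ‖ :=
  calc (1 : ℝ) = ‖inner ℂ (T ξ) (Sd ξ) - inner ℂ (S ξ) (Td ξ)‖ := by
        rw [hST ξ ξ, inner_self_eq_norm_sq_to_K, hξ]; simp
    _ ≤ ‖inner ℂ (T ξ) (Sd ξ)‖ + ‖inner ℂ (S ξ) (Td ξ)‖ := norm_sub_le _ _
    _ ≤ ‖T ξ‖ * ‖Sd ξ‖ + ‖S ξ‖ * ‖Td ξ‖ :=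
        add_le_add (norm_inner_le_norm _ _) (norm_inner_le_norm _ _)

end WeakCommutation

theorem add_mul_le_two_mul_max_mul_max {a a' b b' : ℝ} (ha : 0 ≤ a) (ha' : 0 ≤ a')
    (hb : 0 ≤ b) (hb' : 0 ≤ b') : b * a' + a * b' ≤ 2 * max a a' * max b b' := by
  have hba' : b * a' ≤ max b b' * max a a' :=
    mul_le_mul (le_max_left _ _) (le_max_right _ _) ha' (hb.trans (le_max_left _ _))
  have hab' : a * b' ≤ max a a' * max b b' :=
    mul_le_mul (le_max_left _ _) (le_max_right _ _) hb' (ha.trans (le_max_left _ _))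
  linarith [mul_comm (max b b') (max a a')]

theorem uncertainty_relation_UR1_general
    {H : Type*} [NormedAddCommGroup H] [InnerProductSpace ℂ H]
    (D : Submodule ℂ H)
    (S Sd T Td : D →ₗ[ℂ] H)
    (hS : ∀ ξ η : D, (inner ℂ (S ξ) (η : H) : ℂ) = inner ℂ (ξ : H) (Sd η))
    (hT : ∀ ξ η : D, (inner ℂ (T ξ) (η : H) : ℂ) = inner ℂ (ξ : H) (Td η))
    (hCR : ∀ ξ η : D,
      (inner ℂ (T ξ) (Sd η) : ℂ) - (inner ℂ (S ξ) (Td η) : ℂ) = (inner ℂ (ξ : H) (η : H) : ℂ)) :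
    ∀ ξ : D, ‖(ξ : H)‖ = 1 → ∀ z w : ℂ,
      (1 : ℝ) ≤ 2 * max ‖S ξ - z • (ξ : H)‖ ‖Sd ξ - (starRingEnd ℂ) z • (ξ : H)‖
        * max ‖T ξ - w • (ξ : H)‖ ‖Td ξ - (starRingEnd ℂ) w • (ξ : H)‖ := by
  intro ξ hξ z w
  have hshift := (WeakCommRel.sub_smul_subtype hS hT hCR z w).one_le_add_norm_mul_norm hξ
  simp only [LinearMap.sub_apply, LinearMap.smul_apply, Submodule.subtype_apply] at hshift
  exact hshift.trans (add_mul_le_two_mul_max_mul_max (norm_nonneg _) (norm_nonneg _)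
    (norm_nonneg _) (norm_nonneg _))

theorem uncertainty_relation_UR1
    {H : Type*} [NormedAddCommGroup H] [InnerProductSpace ℂ H]
    (D : Submodule ℂ H) (hD : Dense (D : Set H))
    (S Sd T Td : D →ₗ[ℂ] H)
    (hS : ∀ ξ η : D, (inner ℂ (S ξ) (η : H) : ℂ) = inner ℂ (ξ : H) (Sd η))
    (hT : ∀ ξ η : D, (inner ℂ (T ξ) (η : H) : ℂ) = inner ℂ (ξ : H) (Td η))
    (hCR : ∀ ξ η : D,
      (inner ℂ (T ξ) (Sd η) : ℂ) - (inner ℂ (S ξ) (Td η) : ℂ) = (inner ℂ (ξ : H) (η : H) : ℂ)) :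
    ∀ ξ : D, ‖(ξ : H)‖ = 1 → ∀ z w : ℂ,
      (1 : ℝ) ≤ 2 * max ‖S ξ - z • (ξ : H)‖ ‖Sd ξ - (starRingEnd ℂ) z • (ξ : H)‖
        * max ‖T ξ - w • (ξ : H)‖ ‖Td ξ - (starRingEnd ℂ) w • (ξ : H)‖ :=
  uncertainty_relation_UR1_general D S Sd T Td hS hT hCR
end

section
/- Let S, T ∈ L†(D,H) satisfy the weak commutation relation [S,T] = 1_D, and assume in addition that [S†,T] − [S,T†] = 0 in weak sense, i.e. ⟨Tξ, Sη⟩ − ⟨S†ξ, T†η⟩ = ⟨T†ξ, S†η⟩ − ⟨Sξ, Tη⟩ for all ξ, η ∈ D. Then for every φ ∈ D with ‖φ‖ = 1: ((ΔS)_φ + (ΔS†)_φ)·((ΔT)_φ + (ΔT†)_φ) ≥ 1. -/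
/-!
For a unit vector `φ` the uncertainty of `A` is the norm of the fluctuation `Aφ - ⟪φ, Aφ⟫ φ`.
Writing `s, s†, t, t†` for the fluctuations of `S, S†, T, T†`, the expectation values cancel in
pairs by the adjoint relations, so the commutation relation at `φ` becomes
`⟪t, s†⟫ - ⟪s, t†⟫ = 1`. Cauchy–Schwarz then gives
`1 ≤ ‖t‖ ‖s†‖ + ‖s‖ ‖t†‖ ≤ (‖s‖ + ‖s†‖) (‖t‖ + ‖t†‖)`.
-/

open scoped InnerProductSpace

/-- The uncertainty (ΔA)_φ = (‖Aφ‖² − |⟨Aφ, φ⟩|²)^{1/2} of an operator A ∈ L†(D,H) in the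
state φ ∈ D. -/
noncomputable def uncertainty {H : Type*} [NormedAddCommGroup H] [InnerProductSpace ℂ H]
    {D : Submodule ℂ H} (A : D →ₗ[ℂ] H) (φ : D) : ℝ :=
  Real.sqrt (‖A φ‖ ^ 2 - ‖(inner ℂ (A φ) (φ : H) : ℂ)‖ ^ 2)

section InnerProductSpace

variable {𝕜 E : Type*} [RCLike 𝕜] [NormedAddCommGroup E] [InnerProductSpace 𝕜 E]

theorem inner_sub_inner_smul_sub_inner_smul {u : E} (hu : ‖u‖ = 1) (x y : E) :
    ⟪x - ⟪u, x⟫_𝕜 • u, y - ⟪u, y⟫_𝕜 • u⟫_𝕜 = ⟪x, y⟫_𝕜 - ⟪x, u⟫_𝕜 * ⟪u, y⟫_𝕜 := by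
  simp only [inner_sub_left, inner_sub_right, inner_smul_left, inner_smul_right,
    (inner_eq_one_iff_of_norm_eq_one hu hu).mpr rfl, inner_conj_symm]
  ring

theorem norm_sub_inner_smul_sq {u : E} (hu : ‖u‖ = 1) (x : E) :
    ‖x - ⟪u, x⟫_𝕜 • u‖ ^ 2 = ‖x‖ ^ 2 - ‖⟪x, u⟫_𝕜‖ ^ 2 := by
  have hxu : ⟪x, u⟫_𝕜 * ⟪u, x⟫_𝕜 = (‖⟪x, u⟫_𝕜‖ ^ 2 : ℝ) := by
    rw [← inner_conj_symm u x, RCLike.mul_conj, RCLike.ofReal_pow]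
  rw [← inner_self_eq_norm_sq (𝕜 := 𝕜), ← inner_self_eq_norm_sq (𝕜 := 𝕜),
    inner_sub_inner_smul_sub_inner_smul hu, hxu, map_sub, RCLike.ofReal_re]

theorem norm_inner_sub_inner_le_add_mul_add (s s' t t' : E) :
    ‖⟪t, s'⟫_𝕜 - ⟪s, t'⟫_𝕜‖ ≤ (‖s‖ + ‖s'‖) * (‖t‖ + ‖t'‖) :=
  calc ‖⟪t, s'⟫_𝕜 - ⟪s, t'⟫_𝕜‖ ≤ ‖t‖ * ‖s'‖ + ‖s‖ * ‖t'‖ :=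
        (norm_sub_le _ _).trans (add_le_add (norm_inner_le_norm _ _) (norm_inner_le_norm _ _))
    _ ≤ (‖s‖ + ‖s'‖) * (‖t‖ + ‖t'‖) := by
        nlinarith [norm_nonneg s, norm_nonneg s', norm_nonneg t, norm_nonneg t']

end InnerProductSpace

section Operators

variable {H : Type*} [NormedAddCommGroup H] [InnerProductSpace ℂ H] {D : Submodule ℂ H}

noncomputable def fluctuation (A : D →ₗ[ℂ] H) (φ : D) : H :=
  A φ - ⟪(φ : H), A φ⟫_ℂ • (φ : H)

theorem uncertainty_eq_norm_fluctuation (A : D →ₗ[ℂ] H) {φ : D} (hφ : ‖(φ : H)‖ = 1) :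
    uncertainty A φ = ‖fluctuation A φ‖ := by
  rw [uncertainty, fluctuation, ← norm_sub_inner_smul_sq hφ, Real.sqrt_sq (norm_nonneg _)]

theorem inner_fluctuation_sub_inner_fluctuation {S Sd T Td : D →ₗ[ℂ] H}
    (hS : ∀ ξ η : D, ⟪S ξ, (η : H)⟫_ℂ = ⟪(ξ : H), Sd η⟫_ℂ)
    (hT : ∀ ξ η : D, ⟪T ξ, (η : H)⟫_ℂ = ⟪(ξ : H), Td η⟫_ℂ)
    (hCR : ∀ ξ η : D, ⟪T ξ, Sd η⟫_ℂ - ⟪S ξ, Td η⟫_ℂ = ⟪(ξ : H), (η : H)⟫_ℂ)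
    {φ : D} (hφ : ‖(φ : H)‖ = 1) :
    ⟪fluctuation T φ, fluctuation Sd φ⟫_ℂ - ⟪fluctuation S φ, fluctuation Td φ⟫_ℂ = 1 := by
  unfold fluctuation
  rw [inner_sub_inner_smul_sub_inner_smul hφ, inner_sub_inner_smul_sub_inner_smul hφ, ← hS, ← hT]
  linear_combination (hCR φ φ).trans ((inner_eq_one_iff_of_norm_eq_one hφ hφ).mpr rfl)

end Operators

theorem uncertainty_relation_UR2_general
    {H : Type*} [NormedAddCommGroup H] [InnerProductSpace ℂ H]
    (D : Submodule ℂ H)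
    (S Sd T Td : D →ₗ[ℂ] H)
    (hS : ∀ ξ η : D, (inner ℂ (S ξ) (η : H) : ℂ) = inner ℂ (ξ : H) (Sd η))
    (hT : ∀ ξ η : D, (inner ℂ (T ξ) (η : H) : ℂ) = inner ℂ (ξ : H) (Td η))
    (hCR : ∀ ξ η : D,
      (inner ℂ (T ξ) (Sd η) : ℂ) - (inner ℂ (S ξ) (Td η) : ℂ) = (inner ℂ (ξ : H) (η : H) : ℂ)) :
    ∀ φ : D, ‖(φ : H)‖ = 1 →
      (uncertainty S φ + uncertainty Sd φ) * (uncertainty T φ + uncertainty Td φ) ≥ 1 := by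
  intro φ hφ
  simp only [uncertainty_eq_norm_fluctuation _ hφ]
  calc (1 : ℝ)
      = ‖⟪fluctuation T φ, fluctuation Sd φ⟫_ℂ - ⟪fluctuation S φ, fluctuation Td φ⟫_ℂ‖ := by
        rw [inner_fluctuation_sub_inner_fluctuation hS hT hCR hφ, norm_one]
    _ ≤ _ := norm_inner_sub_inner_le_add_mul_add _ _ _ _

theorem uncertainty_relation_UR2
    {H : Type*} [NormedAddCommGroup H] [InnerProductSpace ℂ H]
    (D : Submodule ℂ H) (hD : Dense (D : Set H))
    (S Sd T Td : D →ₗ[ℂ] H)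
    (hS : ∀ ξ η : D, (inner ℂ (S ξ) (η : H) : ℂ) = inner ℂ (ξ : H) (Sd η))
    (hT : ∀ ξ η : D, (inner ℂ (T ξ) (η : H) : ℂ) = inner ℂ (ξ : H) (Td η))
    (hCR : ∀ ξ η : D,
      (inner ℂ (T ξ) (Sd η) : ℂ) - (inner ℂ (S ξ) (Td η) : ℂ) = (inner ℂ (ξ : H) (η : H) : ℂ))
    -- [S†,T] − [S,T†] = 0 in weak sense
    (hsym : ∀ ξ η : D,
      (inner ℂ (T ξ) (S η) : ℂ) - (inner ℂ (Sd ξ) (Td η) : ℂ)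
        = (inner ℂ (Td ξ) (Sd η) : ℂ) - (inner ℂ (S ξ) (T η) : ℂ)) :
    ∀ φ : D, ‖(φ : H)‖ = 1 →
      (uncertainty S φ + uncertainty Sd φ) * (uncertainty T φ + uncertainty Td φ) ≥ 1 :=
  uncertainty_relation_UR2_general D S Sd T Td hS hT hCR
end

section
/- Let S, T ∈ L†(D,H) satisfy the weak commutation relation [S,T] = 1_D, and assume S* = closure(S†) and T* = closure(T†) (equality of densely defined operators in H, where S, S†, T, T† have domain D). Let n ≥ 1 and suppose that for every ξ ∈ D and every k with 1 ≤ k ≤ n: ξ ∈ D(S̄^k) ∩ D((S*)^k), S̄^k ξ ∈ D(T̄), and (S*)^k ξ ∈ D(T*). Then for every ξ ∈ D and every k with 1 ≤ k ≤ n: Tξ ∈ D(S̄^k) with S̄^k Tξ = T̄ S̄^k ξ + k S̄^{k−1} ξ, and T†ξ ∈ D((S*)^k) with (S*)^k T†ξ = T* (S*)^k ξ − k (S*)^{k−1} ξ. -/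
/-- The partial operator `H →ₗ.[ℂ] H` with domain `D` given by a linear map `S : D →ₗ[ℂ] H`. -/
def LinearMap.toPMapOn {H : Type*} [NormedAddCommGroup H] [InnerProductSpace ℂ H]
    (D : Submodule ℂ H) (S : D →ₗ[ℂ] H) : H →ₗ.[ℂ] H :=
  ⟨D, S⟩

/-- `IterMem X k ξ v` means: `ξ ∈ D(X^k)` and `X^k ξ = v`, for a partial operator `X`,
expressed through the chain `ξ = u 0, u 1 = X u 0, …, u k = X u (k-1) = v` with each
`u j` (j < k) in the domain of `X`. -/
def IterMem {H : Type*} [NormedAddCommGroup H] [InnerProductSpace ℂ H]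
    (X : H →ₗ.[ℂ] H) (k : ℕ) (ξ v : H) : Prop :=
  ∃ u : ℕ → H, u 0 = ξ ∧ u k = v ∧ ∀ j < k, ∃ h : u j ∈ X.domain, X ⟨u j, h⟩ = u (j + 1)

/-!
The weak relation `[S, T] = 1` passes to the closures: for `w ∈ D(S̄) ∩ D(T̄)` and `η ∈ D`,
`⟪S† η, T̄ w⟫ = ⟪T† η, S̄ w⟫ + ⟪η, w⟫`. Indeed `S† η ∈ D(T*)` (the case `k = 1` of the domain
hypothesis), so the left side is `⟪T* S† η, w⟫`, and both sides are continuous in `(w, S̄ w)`,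
which lies in the closure of the graph of `S`. By von Neumann's theorem and `S* = closure S†`,
`(S†)* = S̄`, so `v ∈ D(S̄)` with `S̄ v = u` as soon as `⟪S† η, v⟫ = ⟪η, u⟫` for all `η ∈ D`.
Together: `S̄ T̄ x = T̄ S̄ x + x` whenever `x, S̄ x ∈ D(T̄)`, and induction on `k` gives the first
formula. The second is the same argument for the pair `(S†, T†)`, whose commutator is `-1`,
using `S* = closure S†` and `T* = closure T†`.
-/

open LinearPMap

namespace Submodule

variable {𝕜 E F : Type*} [RCLike 𝕜] [NormedAddCommGroup E] [InnerProductSpace 𝕜 E]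
  [NormedAddCommGroup F] [InnerProductSpace 𝕜 F]

theorem adjoint_topologicalClosure (g : Submodule 𝕜 (E × F)) :
    g.topologicalClosure.adjoint = g.adjoint := by
  ext x
  simp only [mem_adjoint_iff]
  refine ⟨fun h a b hab => h a b (g.le_topologicalClosure hab), fun h a b hab => ?_⟩
  have hclosed : IsClosed {p : E × F | inner 𝕜 p.2 x.1 - inner 𝕜 p.1 x.2 = 0} :=
    isClosed_eq (by fun_prop) continuous_const
  rw [← SetLike.mem_coe, topologicalClosure_coe] at hab
  exact closure_minimal (fun p hp => h p.1 p.2 hp) hclosed hab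

theorem adjoint_adjoint_le [CompleteSpace E] [CompleteSpace F] (g : Submodule 𝕜 (E × F)) :
    g.adjoint.adjoint ≤ g.topologicalClosure := by
  intro x hx
  let K := g.comap (WithLp.linearEquiv 2 𝕜 (E × F)).toLinearMap
  have hxK : WithLp.toLp 2 x ∈ Kᗮᗮ := by
    refine (mem_orthogonal _ _).2 fun u hu => ?_
    have hadj : ((WithLp.ofLp u).2, -(WithLp.ofLp u).1) ∈ g.adjoint := by
      refine (mem_adjoint_iff _ _).2 fun a b hab => ?_
      have := hu (WithLp.toLp 2 (a, b)) hab
      rw [WithLp.prod_inner_apply] at this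
      rw [inner_neg_right]
      linear_combination this
    have := (mem_adjoint_iff _ _).1 hx _ _ hadj
    rw [WithLp.prod_inner_apply]
    rw [inner_neg_left] at this
    linear_combination -this
  rw [orthogonal_orthogonal_eq_closure] at hxK
  have := map_mem_closure (WithLp.prod_continuous_ofLp 2 E F) hxK (fun y hy => hy)
  simpa [← topologicalClosure_coe] using this

end Submodule

namespace LinearPMap

variable {𝕜 E F : Type*} [RCLike 𝕜] [NormedAddCommGroup E] [InnerProductSpace 𝕜 E]
  [NormedAddCommGroup F] [InnerProductSpace 𝕜 F] {T : E →ₗ.[𝕜] F} {S : F →ₗ.[𝕜] E}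

theorem mem_graph_iff_exists_mem {x : E} {y : F} :
    (x, y) ∈ T.graph ↔ ∃ h : x ∈ T.domain, T ⟨x, h⟩ = y := by
  simp

theorem closure_le_of_le_of_isClosed {U : E →ₗ.[𝕜] F} (h : T ≤ U) (hU : U.IsClosed) :
    T.closure ≤ U := by
  rw [← le_graph_iff, ← (hU.isClosable.leIsClosable h).graph_closure_eq_closure_graph]
  exact T.graph.topologicalClosure_minimal (le_graph_of_le h) hU

section Complete

variable [CompleteSpace E]

theorem mem_adjoint_graph_iff (hT : Dense (T.domain : Set E)) {y : F} {x : E} :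
    (y, x) ∈ T†.graph ↔ ∀ a b, (a, b) ∈ T.graph → inner 𝕜 b y = inner 𝕜 a x := by
  simp only [adjoint_graph_eq_graph_adjoint hT, Submodule.mem_adjoint_iff, sub_eq_zero]

theorem adjoint_closure (hT : Dense (T.domain : Set E)) (hc : T.IsClosable) :
    T.closure† = T† := by
  refine eq_of_eq_graph ?_
  rw [adjoint_graph_eq_graph_adjoint (hT.mono T.le_closure.1), adjoint_graph_eq_graph_adjoint hT,
    ← hc.graph_closure_eq_closure_graph, Submodule.adjoint_topologicalClosure]

theorem adjoint_adjoint_le_closure [CompleteSpace F] (hT : Dense (T.domain : Set E))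
    (hT' : Dense (T†.domain : Set F)) : T†† ≤ T.closure := by
  have hc : T.IsClosable :=
    (adjoint_isClosed hT').isClosable.leIsClosable ((adjoint_isFormalAdjoint hT).le_adjoint hT')
  rw [← le_graph_iff, adjoint_graph_eq_graph_adjoint hT', adjoint_graph_eq_graph_adjoint hT,
    ← hc.graph_closure_eq_closure_graph]
  exact Submodule.adjoint_adjoint_le T.graph

end Complete

theorem IsFormalAdjoint.closure_le_adjoint [CompleteSpace F] (hS : Dense (S.domain : Set F))
    (h : T.IsFormalAdjoint S) : T.closure ≤ S† :=
  closure_le_of_le_of_isClosed (h.symm.le_adjoint hS) (adjoint_isClosed hS)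

theorem IsFormalAdjoint.isClosable [CompleteSpace F] (hS : Dense (S.domain : Set F))
    (h : T.IsFormalAdjoint S) : T.IsClosable :=
  (adjoint_isClosed hS).isClosable.leIsClosable (h.symm.le_adjoint hS)

theorem adjoint_le_closure_of_adjoint_eq_closure [CompleteSpace E] [CompleteSpace F]
    (hT : Dense (T.domain : Set E)) (hS : Dense (S.domain : Set F)) (h : T† = S.closure) :
    S† ≤ T.closure := by
  have hSc : S.IsClosable :=
    (adjoint_isClosed hT).isClosable.leIsClosable (h ▸ S.le_closure)
  rw [← adjoint_closure hS hSc, ← h]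
  exact adjoint_adjoint_le_closure hT (h ▸ hS.mono S.le_closure.1)

end LinearPMap

section IterMem

variable {H : Type*} [NormedAddCommGroup H] [InnerProductSpace ℂ H] {X : H →ₗ.[ℂ] H}
  {k : ℕ} {ξ v w : H}

theorem iterMem_zero_iff : IterMem X 0 ξ v ↔ v = ξ :=
  ⟨fun ⟨_, h0, hv, _⟩ => hv ▸ h0, fun hv => ⟨fun _ => ξ, rfl, hv.symm, by simp⟩⟩

theorem iterMem_succ_iff :
    IterMem X (k + 1) ξ w ↔ ∃ v, IterMem X k ξ v ∧ (v, w) ∈ X.graph := by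
  simp only [mem_graph_iff_exists_mem]
  constructor
  · rintro ⟨u, h0, hw, hu⟩
    exact ⟨u k, ⟨u, h0, rfl, fun j hj => hu j (by omega)⟩, hw ▸ hu k k.lt_succ_self⟩
  · rintro ⟨v, ⟨u, h0, hv, hu⟩, hvw⟩
    refine ⟨Function.update u (k + 1) w, by simp [h0], by simp, fun j hj => ?_⟩
    rcases Nat.lt_succ_iff_lt_or_eq.1 hj with hj | rfl
    · simpa [Function.update_of_ne (show j ≠ k + 1 by omega),
        Function.update_of_ne (show j + 1 ≠ k + 1 by omega)] using hu j hj
    · simpa [Function.update_of_ne (show j ≠ j + 1 by omega), hv] using hvw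

theorem iterMem_one_iff : IterMem X 1 ξ v ↔ (ξ, v) ∈ X.graph := by
  simp [iterMem_succ_iff, iterMem_zero_iff]

theorem IterMem.unique {v' : H} (h : IterMem X k ξ v) (h' : IterMem X k ξ v') : v = v' := by
  induction k generalizing v v' with
  | zero => rw [iterMem_zero_iff.1 h, iterMem_zero_iff.1 h']
  | succ k ih =>
    obtain ⟨a, ha, hav⟩ := iterMem_succ_iff.1 h
    obtain ⟨a', ha', hav'⟩ := iterMem_succ_iff.1 h'
    exact X.mem_graph_snd_inj hav hav' (ih ha ha')

theorem IterMem.one_eq_of_le {Y : H →ₗ.[ℂ] H} (h : IterMem X 1 ξ v) (hYX : Y ≤ X)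
    (hξ : ξ ∈ Y.domain) : v = Y ⟨ξ, hξ⟩ :=
  X.mem_graph_snd_inj (iterMem_one_iff.1 h) (le_graph_of_le hYX (Y.mem_graph ⟨ξ, hξ⟩)) rfl

theorem iterMem_of_chain {n : ℕ} {u : ℕ → H} (h0 : u 0 = ξ)
    (hu : ∀ j < n, ∃ h : u j ∈ X.domain, X ⟨u j, h⟩ = u (j + 1)) (hk : k ≤ n) :
    IterMem X k ξ (u k) :=
  ⟨u, h0, rfl, fun j hj => hu j (by omega)⟩

end IterMem

section Commutator

-- `hCR` is the conjugate of `⟪B ξ, Ad η⟫ - ⟪A ξ, Bd η⟫ = ⟪ξ, η⟫` scaled by `c`; in this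
-- orientation `c` sits in the linear slot of the inner product and may be any complex number.
variable {H : Type*} [NormedAddCommGroup H] [InnerProductSpace ℂ H] [CompleteSpace H]
  {D : Submodule ℂ H} {A Ad B Bd : D →ₗ[ℂ] H} {c : ℂ}
  (hD : Dense (D : Set H))
  (hA : (A.toPMapOn D).IsFormalAdjoint (Ad.toPMapOn D))
  (hB : (B.toPMapOn D).IsFormalAdjoint (Bd.toPMapOn D))
  (hCR : ∀ ξ η : D, inner ℂ (Ad η) (B ξ) - inner ℂ (Bd η) (A ξ) = c * inner ℂ (η : H) (ξ : H))
  (hAdB : ∀ η : D, Ad η ∈ (B.toPMapOn D)†.domain)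

include hD hB in
theorem inner_eq_of_mem_closure_graph {x y : H}
    (hxy : (x, y) ∈ (B.toPMapOn D).closure.graph) (η : D) :
    inner ℂ (Bd η) x = inner ℂ (η : H) y :=
  (mem_adjoint_graph_iff hD).1 (le_graph_of_le (hB.closure_le_adjoint hD) hxy) _ _
    ((Bd.toPMapOn D).mem_graph η)

include hD hA hB hCR hAdB in
theorem inner_commutator_closure {w w' w'' : H}
    (hw' : (w, w') ∈ (A.toPMapOn D).closure.graph)
    (hw'' : (w, w'') ∈ (B.toPMapOn D).closure.graph) (η : D) :
    inner ℂ (Ad η) w'' = inner ℂ (Bd η) w' + c * inner ℂ (η : H) w := by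
  set z := (B.toPMapOn D)† ⟨Ad η, hAdB η⟩
  have hz : (Ad η, z) ∈ (B.toPMapOn D).closure†.graph := by
    rw [adjoint_closure hD (hB.isClosable hD)]
    exact ((B.toPMapOn D)†).mem_graph ⟨Ad η, hAdB η⟩
  have hpair : inner ℂ (Ad η) w'' = inner ℂ z w := by
    have hBc := (mem_adjoint_graph_iff (hD.mono (B.toPMapOn D).le_closure.1)).1 hz w w'' hw''
    rw [← inner_conj_symm, hBc, inner_conj_symm]
  have hclosed : IsClosed
      {p : H × H | inner ℂ z p.1 = inner ℂ (Bd η) p.2 + c * inner ℂ (η : H) p.1} :=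
    isClosed_eq (by fun_prop) (by fun_prop)
  have hgraph : ((A.toPMapOn D).graph : Set (H × H)) ⊆
      {p | inner ℂ z p.1 = inner ℂ (Bd η) p.2 + c * inner ℂ (η : H) p.1} := by
    intro p hp
    obtain ⟨ξ, rfl, rfl⟩ := (mem_graph_iff' _).1 hp
    have hzξ : inner ℂ z (ξ : H) = inner ℂ (Ad η) (B ξ) :=
      adjoint_isFormalAdjoint hD ⟨Ad η, hAdB η⟩ ξ
    exact hzξ.trans (sub_eq_iff_eq_add'.1 (hCR ξ η))
  rw [← (hA.isClosable hD).graph_closure_eq_closure_graph, ← SetLike.mem_coe,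
    Submodule.topologicalClosure_coe] at hw'
  rw [hpair]
  exact closure_minimal hgraph hclosed hw'

include hD hA hB hCR hAdB in
theorem mem_closure_graph_commutator (hE : (Ad.toPMapOn D)† ≤ (A.toPMapOn D).closure)
    {x x' y y' : H} (hx : (x, x') ∈ (A.toPMapOn D).closure.graph)
    (hy : (x, y) ∈ (B.toPMapOn D).closure.graph)
    (hy' : (x', y') ∈ (B.toPMapOn D).closure.graph) :
    (y, y' + c • x) ∈ (A.toPMapOn D).closure.graph := by
  refine le_graph_of_le hE ((mem_adjoint_graph_iff hD).2 fun a b hab => ?_)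
  obtain ⟨η, rfl, rfl⟩ := (mem_graph_iff' _).1 hab
  rw [inner_add_right, inner_smul_right, ← inner_eq_of_mem_closure_graph hD hB hy' η]
  exact inner_commutator_closure hD hA hB hCR hAdB hx hy η

include hD hA hB hCR hAdB in
theorem iterMem_apply_of_chain (hE : (Ad.toPMapOn D)† ≤ (A.toPMapOn D).closure)
    {ξ : D} {k : ℕ} {u : ℕ → H} (hu0 : u 0 = ξ)
    (hu : ∀ j < k, (u j, u (j + 1)) ∈ (A.toPMapOn D).closure.graph)
    (huB : ∀ j ≤ k, u j ∈ (B.toPMapOn D).closure.domain) :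
    ∀ m ≤ k, ∀ y, (u m, y) ∈ (B.toPMapOn D).closure.graph →
      IterMem (A.toPMapOn D).closure m (B ξ) (y + (c * m) • u (m - 1)) := by
  intro m
  induction m with
  | zero =>
    intro _ y hy
    have hyB : y = B ξ := (B.toPMapOn D).closure.mem_graph_snd_inj hy
      (le_graph_of_le (B.toPMapOn D).le_closure ((B.toPMapOn D).mem_graph ξ)) hu0
    simpa [hyB] using iterMem_zero_iff.2 rfl
  | succ m ih =>
    intro hm y hy
    obtain ⟨ym, hym⟩ := mem_domain_iff.1 (huB m (by omega))
    have hstep : (ym + (c * m) • u (m - 1), y + (c * (m + 1 : ℕ)) • u m) ∈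
        (A.toPMapOn D).closure.graph := by
      have h1 := mem_closure_graph_commutator hD hA hB hCR hAdB hE (hu m hm) hym hy
      have h2 : ((c * m) • u (m - 1), (c * m) • u m) ∈ (A.toPMapOn D).closure.graph := by
        rcases m with _ | m
        · simp
        · exact Submodule.smul_mem _ _ (hu m (by omega))
      convert Submodule.add_mem _ h1 h2 using 1
      rw [Prod.mk_add_mk]
      congr 1
      push_cast
      module
    exact iterMem_succ_iff.2 ⟨_, ih (by omega) ym hym, hstep⟩

include hD hA hB hCR hAdB in
theorem iterMem_apply_commutator (hE : (Ad.toPMapOn D)† ≤ (A.toPMapOn D).closure)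
    (ξ : D) {k : ℕ} (hdom : ∀ j, 1 ≤ j → j ≤ k →
      ∃ a, IterMem (A.toPMapOn D).closure j ξ a ∧ a ∈ (B.toPMapOn D).closure.domain)
    {a b : H} (ha : IterMem (A.toPMapOn D).closure k ξ a)
    (hb : IterMem (A.toPMapOn D).closure (k - 1) ξ b)
    (haB : a ∈ (B.toPMapOn D).closure.domain) :
    IterMem (A.toPMapOn D).closure k (B ξ) ((B.toPMapOn D).closure ⟨a, haB⟩ + (c * k) • b) := by
  obtain ⟨u, hu0, rfl, hu⟩ := ha
  obtain rfl : b = u (k - 1) := hb.unique (iterMem_of_chain hu0 hu (Nat.sub_le k 1))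
  have huB : ∀ j ≤ k, u j ∈ (B.toPMapOn D).closure.domain := by
    intro j hj
    rcases Nat.eq_zero_or_pos j with rfl | hj0
    · exact hu0 ▸ (B.toPMapOn D).le_closure.1 ξ.2
    · obtain ⟨a, ha, haB⟩ := hdom j hj0 hj
      exact ha.unique (iterMem_of_chain hu0 hu hj) ▸ haB
  exact iterMem_apply_of_chain hD hA hB hCR hAdB hE hu0
    (fun j hj => mem_graph_iff_exists_mem.2 (hu j hj)) huB k le_rfl _ (mem_graph _ ⟨u k, haB⟩)

end Commutator

theorem power_commutation_relations
    {H : Type*} [NormedAddCommGroup H] [InnerProductSpace ℂ H] [CompleteSpace H]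
    (D : Submodule ℂ H) (hD : Dense (D : Set H))
    (S Sd T Td : D →ₗ[ℂ] H)
    (hS : ∀ ξ η : D, (inner ℂ (S ξ) (η : H) : ℂ) = inner ℂ (ξ : H) (Sd η))
    (hT : ∀ ξ η : D, (inner ℂ (T ξ) (η : H) : ℂ) = inner ℂ (ξ : H) (Td η))
    (hCR : ∀ ξ η : D,
      (inner ℂ (T ξ) (Sd η) : ℂ) - (inner ℂ (S ξ) (Td η) : ℂ) = (inner ℂ (ξ : H) (η : H) : ℂ))
    -- S* = closure(S†) and T* = closure(T†)
    (hSadj : (LinearMap.toPMapOn D S).adjoint = (LinearMap.toPMapOn D Sd).closure)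
    (hTadj : (LinearMap.toPMapOn D T).adjoint = (LinearMap.toPMapOn D Td).closure)
    (n : ℕ) (hn : 1 ≤ n)
    -- domain hypotheses: for every ξ ∈ D and 1 ≤ k ≤ n,
    -- ξ ∈ D(S̄^k) ∩ D((S*)^k), S̄^k ξ ∈ D(T̄) and (S*)^k ξ ∈ D(T*)
    (hdom : ∀ ξ : D, ∀ k : ℕ, 1 ≤ k → k ≤ n →
      (∃ a : H, IterMem (LinearMap.toPMapOn D S).closure k (ξ : H) a ∧
        a ∈ (LinearMap.toPMapOn D T).closure.domain) ∧
      (∃ a' : H, IterMem (LinearMap.toPMapOn D S).adjoint k (ξ : H) a' ∧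
        a' ∈ (LinearMap.toPMapOn D T).adjoint.domain)) :
    ∀ ξ : D, ∀ k : ℕ, 1 ≤ k → k ≤ n →
      -- Tξ ∈ D(S̄^k) with S̄^k Tξ = T̄ S̄^k ξ + k S̄^{k−1} ξ
      (∀ a b : H, IterMem (LinearMap.toPMapOn D S).closure k (ξ : H) a →
        IterMem (LinearMap.toPMapOn D S).closure (k - 1) (ξ : H) b →
        ∀ ha : a ∈ (LinearMap.toPMapOn D T).closure.domain,
          IterMem (LinearMap.toPMapOn D S).closure k (T ξ)
            ((LinearMap.toPMapOn D T).closure ⟨a, ha⟩ + (k : ℂ) • b)) ∧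
      -- T†ξ ∈ D((S*)^k) with (S*)^k T†ξ = T*(S*)^k ξ − k (S*)^{k−1} ξ
      (∀ a b : H, IterMem (LinearMap.toPMapOn D S).adjoint k (ξ : H) a →
        IterMem (LinearMap.toPMapOn D S).adjoint (k - 1) (ξ : H) b →
        ∀ ha : a ∈ (LinearMap.toPMapOn D T).adjoint.domain,
          IterMem (LinearMap.toPMapOn D S).adjoint k (Td ξ)
            ((LinearMap.toPMapOn D T).adjoint ⟨a, ha⟩ - (k : ℂ) • b)) := by
  have hS' : (S.toPMapOn D).IsFormalAdjoint (Sd.toPMapOn D) := hS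
  have hT' : (T.toPMapOn D).IsFormalAdjoint (Td.toPMapOn D) := hT
  have hSdT : ∀ η : D, Sd η ∈ (T.toPMapOn D)†.domain := fun η => by
    obtain ⟨a, ha, haT⟩ := (hdom η 1 le_rfl hn).2
    rwa [ha.one_eq_of_le (hS'.le_adjoint hD) η.2] at haT
  have hSTd : ∀ η : D, S η ∈ (Td.toPMapOn D)†.domain := fun η => by
    obtain ⟨a, ha, haT⟩ := (hdom η 1 le_rfl hn).1
    rw [ha.one_eq_of_le (S.toPMapOn D).le_closure η.2] at haT
    exact (hT'.closure_le_adjoint hD).1 haT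
  have hCR₁ : ∀ ξ η : D,
      inner ℂ (Sd η) (T ξ) - inner ℂ (Td η) (S ξ) = 1 * inner ℂ (η : H) (ξ : H) := fun ξ η => by
    rw [one_mul, ← inner_conj_symm, ← inner_conj_symm (Td η), ← _root_.map_sub, hCR,
      inner_conj_symm]
  have hCR₂ : ∀ ξ η : D,
      inner ℂ (S η) (Td ξ) - inner ℂ (T η) (Sd ξ) = -1 * inner ℂ (η : H) (ξ : H) := fun ξ η => by
    rw [neg_one_mul, ← hCR η ξ, neg_sub]
  intro ξ k _ hkn
  constructor
  · intro a b ha hb haT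
    simpa using iterMem_apply_commutator hD hS' hT' hCR₁ hSdT
      (adjoint_le_closure_of_adjoint_eq_closure hD hD hSadj) ξ
      (fun j h1 h2 => (hdom ξ j h1 (h2.trans hkn)).1) ha hb haT
  · rw [hSadj, hTadj]
    intro a b ha hb haT
    have hdom' : ∀ j, 1 ≤ j → j ≤ k → ∃ a, IterMem (Sd.toPMapOn D).closure j ξ a ∧
        a ∈ (Td.toPMapOn D).closure.domain := fun j h1 h2 => by
      simpa only [hSadj, hTadj] using (hdom ξ j h1 (h2.trans hkn)).2
    simpa [sub_eq_add_neg] using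
      iterMem_apply_commutator hD hS'.symm hT'.symm hCR₂ hSTd hSadj.le ξ hdom' ha hb haT
end
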